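/- arXiv:math/0412322 — 5 statements merged into one kernel-verified Lean document; each statement's English description precedes it below -/
import Mathlib

section
/- Let α ∈ (0, 1/2] and let Ψ be a (sub)critical branching mechanism. Then the function q ↦ Ψ(q^α) on (0,∞) is a Bernstein function. -/
open MeasureTheory Real Set
open scoped ContDiff

noncomputable section

/-- A Bernstein function: infinitely differentiable on `(0,∞)`, nonnegative there,
and `(-1)^(n-1) f^(n)(q) ≥ 0` for all `n ≥ 1` and `q > 0`. -/
def IsBernstein (f : ℝ → ℝ) : Prop :=
  ContDiffOn ℝ (⊤ : ℕ∞) f (Ioi 0) ∧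
  (∀ q > (0:ℝ), 0 ≤ f q) ∧
  ∀ n : ℕ, 1 ≤ n → ∀ q > (0:ℝ), 0 ≤ (-1 : ℝ) ^ (n - 1) * iteratedDerivWithin n f (Ioi 0) q

/-- A completely monotone function: infinitely differentiable on `(0,∞)` with
`(-1)^n f^(n)(q) ≥ 0` for all `n ≥ 0` and `q > 0`. -/
def IsCompletelyMonotone (f : ℝ → ℝ) : Prop :=
  ContDiffOn ℝ (⊤ : ℕ∞) f (Ioi 0) ∧
  ∀ n : ℕ, ∀ q > (0:ℝ), 0 ≤ (-1 : ℝ) ^ n * iteratedDerivWithin n f (Ioi 0) q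

/-- A (sub)critical branching mechanism:
`Ψ q = a q + b q² + ∫_{(0,∞)} (e^(-qx) - 1 + qx) Pi(dx)` with `a, b ≥ 0` and
`∫ min(x, x²) Pi(dx) < ∞` (`Pi` a measure carried by `(0,∞)`). -/
def IsBranchingMechanism (Ψ : ℝ → ℝ) : Prop :=
  ∃ (a b : ℝ) (Pi : Measure ℝ), 0 ≤ a ∧ 0 ≤ b ∧ Pi (Iic 0) = 0 ∧
    (∫⁻ x, ENNReal.ofReal (min x (x ^ 2)) ∂Pi) < ⊤ ∧
    ∀ q > (0:ℝ), Ψ q = a * q + b * q ^ 2 + ∫ x, (Real.exp (-q * x) - 1 + q * x) ∂Pi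

namespace BernAux

/-- A derivative tower on `(0,∞)`. -/
def Chain (H : ℕ → ℝ → ℝ) : Prop :=
  ∀ n : ℕ, ∀ q : ℝ, 0 < q → HasDerivAt (H n) (H (n + 1) q) q

/-- Alternating signs on `(0,∞)`. -/
def Alt (H : ℕ → ℝ → ℝ) : Prop :=
  ∀ n : ℕ, ∀ q : ℝ, 0 < q → 0 ≤ (-1 : ℝ) ^ n * H n q

lemma Chain.shift {H : ℕ → ℝ → ℝ} (h : Chain H) : Chain (fun n => H (n + 1)) :=
  fun n q hq => h (n + 1) q hq

lemma chain_contDiffOn_nat (n : ℕ) :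
    ∀ (H : ℕ → ℝ → ℝ), Chain H → ContDiffOn ℝ n (H 0) (Ioi 0) := by
  induction n with
  | zero =>
    intro H hH
    rw [show ((0 : ℕ) : WithTop ℕ∞) = 0 from rfl, contDiffOn_zero]
    exact fun q hq => (hH 0 q hq).continuousAt.continuousWithinAt
  | succ n ih =>
    intro H hH
    have hcast : ((n + 1 : ℕ) : WithTop ℕ∞) = (n : WithTop ℕ∞) + 1 := by
      push_cast; ring
    rw [hcast, contDiffOn_succ_iff_derivWithin (uniqueDiffOn_Ioi 0)]
    refine ⟨fun q hq => (hH 0 q hq).differentiableAt.differentiableWithinAt, by simp, ?_⟩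
    have heq : EqOn (derivWithin (H 0) (Ioi 0)) (H 1) (Ioi 0) := by
      intro q hq
      rw [derivWithin_of_isOpen isOpen_Ioi hq, (hH 0 q hq).deriv]
    exact (ih (fun k => H (k + 1)) hH.shift).congr heq

lemma chain_contDiffOn {H : ℕ → ℝ → ℝ} (hH : Chain H) :
    ContDiffOn ℝ (⊤ : ℕ∞) (H 0) (Ioi 0) := by
  rw [show ((⊤ : ℕ∞) : WithTop ℕ∞) = ∞ from rfl, contDiffOn_infty]
  exact fun n => chain_contDiffOn_nat n H hH

lemma chain_iteratedDerivWithin {H : ℕ → ℝ → ℝ} (hH : Chain H) :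
    ∀ n : ℕ, ∀ q ∈ Ioi (0:ℝ), iteratedDerivWithin n (H 0) (Ioi 0) q = H n q := by
  intro n
  induction n with
  | zero => intro q _; simp
  | succ n ih =>
    intro q hq
    rw [iteratedDerivWithin_succ,
      derivWithin_congr (fun t ht => ih t ht) (ih q hq),
      derivWithin_of_isOpen isOpen_Ioi hq, (hH n q hq).deriv]

/-- One mean-value step for a completely monotone tower. -/
lemma chain_step {H : ℕ → ℝ → ℝ} (hC : Chain H) (hA : Alt H) (n : ℕ) (q h : ℝ)
    (hh : 0 < h) (hhq : h < q) :
    (-1 : ℝ) ^ (n + 1) * H (n + 1) q ≤ h⁻¹ * ((-1 : ℝ) ^ n * H n (q - h)) := by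
  set w : ℝ → ℝ := fun t => (-1 : ℝ) ^ n * H n t with hw
  set v : ℝ → ℝ := fun t => (-1 : ℝ) ^ (n + 1) * H (n + 1) t with hv
  have hq0 : 0 < q - h := by linarith
  have hwderiv : ∀ t : ℝ, 0 < t → HasDerivAt w (-(v t)) t := by
    intro t ht
    have heq : -(v t) = (-1 : ℝ) ^ n * H (n + 1) t := by simp [hv]; ring
    rw [heq]
    exact (hC n t ht).const_mul _
  have hvderiv : ∀ t : ℝ, 0 < t → HasDerivAt v ((-1 : ℝ) ^ (n + 1) * H (n + 2) t) t := by
    intro t ht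
    exact (hC (n + 1) t ht).const_mul _
  have hvderiv_nonpos : ∀ t : ℝ, 0 < t → (-1 : ℝ) ^ (n + 1) * H (n + 2) t ≤ 0 := by
    intro t ht
    have h2 := hA (n + 2) t ht
    have : (-1 : ℝ) ^ (n + 1) * H (n + 2) t = -((-1 : ℝ) ^ (n + 2) * H (n + 2) t) := by
      ring
    rw [this]; linarith
  -- MVT for w on [q-h, q]
  obtain ⟨ξ, hξmem, hξ⟩ := exists_hasDerivAt_eq_slope w (fun t => -(v t)) (by linarith : q - h < q)
    (fun t ht => (hwderiv t (lt_of_lt_of_le hq0 ht.1)).continuousAt.continuousWithinAt)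
    (fun t ht => hwderiv t (lt_trans hq0 ht.1))
  have hξ0 : 0 < ξ := lt_trans hq0 hξmem.1
  have hξq : ξ < q := hξmem.2
  -- MVT for v on [ξ, q]
  obtain ⟨ζ, hζmem, hζ⟩ := exists_hasDerivAt_eq_slope v (fun t => (-1 : ℝ) ^ (n + 1) * H (n + 2) t)
    hξq
    (fun t ht => (hvderiv t (lt_of_lt_of_le hξ0 ht.1)).continuousAt.continuousWithinAt)
    (fun t ht => hvderiv t (lt_trans hξ0 ht.1))
  have hζ0 : 0 < ζ := lt_trans hξ0 hζmem.1
  have hslope : (v q - v ξ) / (q - ξ) ≤ 0 := hζ ▸ hvderiv_nonpos ζ hζ0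
  have hvq : v q ≤ v ξ := by
    have hpos : 0 < q - ξ := by linarith
    have h1 : (v q - v ξ) / (q - ξ) * (q - ξ) ≤ 0 :=
      mul_nonpos_of_nonpos_of_nonneg hslope hpos.le
    rw [div_mul_cancel₀ _ hpos.ne'] at h1
    linarith
  have hwq : 0 ≤ w q := hA n q (by linarith)
  have hwqh : 0 ≤ w (q - h) := hA n (q - h) hq0
  have hξval : v ξ = (w (q - h) - w q) / h := by
    have : -(v ξ) = (w q - w (q - h)) / (q - (q - h)) := hξ
    rw [show q - (q - h) = h by ring] at this
    rw [eq_div_iff hh.ne'] at this ⊢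
    linarith
  have : v q ≤ (w (q - h) - w q) / h := hξval ▸ hvq
  calc (-1 : ℝ) ^ (n + 1) * H (n + 1) q = v q := rfl
    _ ≤ (w (q - h) - w q) / h := this
    _ ≤ w (q - h) / h := by gcongr <;> linarith
    _ = h⁻¹ * ((-1 : ℝ) ^ n * H n (q - h)) := by rw [div_eq_inv_mul]

/-- Iterated mean-value bound for a completely monotone tower. -/
lemma chain_bound {H : ℕ → ℝ → ℝ} (hC : Chain H) (hA : Alt H) :
    ∀ (n : ℕ) (q h : ℝ), 0 < h → (n : ℝ) * h < q →
      (-1 : ℝ) ^ n * H n q ≤ (h⁻¹) ^ n * H 0 (q - n * h) := by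
  intro n
  induction n with
  | zero => intro q h _ _; simp
  | succ n ih =>
    intro q h hh hq
    have hn1 : (0:ℝ) < (n:ℝ) + 1 := by positivity
    have hn0 : (0:ℝ) ≤ (n:ℝ) := Nat.cast_nonneg n
    push_cast at hq
    have hhq : h < q := by nlinarith [mul_nonneg hn0 hh.le]
    have step := chain_step hC hA n q h hh hhq
    have ihq : (-1 : ℝ) ^ n * H n (q - h) ≤ (h⁻¹) ^ n * H 0 (q - h - n * h) := by
      apply ih (q - h) h hh
      linarith
    have hinv : (0:ℝ) ≤ h⁻¹ := by positivity
    calc (-1 : ℝ) ^ (n + 1) * H (n + 1) q ≤ h⁻¹ * ((-1 : ℝ) ^ n * H n (q - h)) := step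
      _ ≤ h⁻¹ * ((h⁻¹) ^ n * H 0 (q - h - n * h)) := by
          apply mul_le_mul_of_nonneg_left ihq hinv
      _ = (h⁻¹) ^ (n + 1) * H 0 (q - (n + 1 : ℕ) * h) := by
          rw [pow_succ]
          push_cast
          ring_nf


/-- The tower of iterated derivatives of `q ↦ q ^ r`. -/
def P (r : ℝ) (n : ℕ) (q : ℝ) : ℝ := (∏ i ∈ Finset.range n, (r - i)) * q ^ (r - n)

lemma P_zero (r : ℝ) (q : ℝ) : P r 0 q = q ^ r := by simp [P]

lemma P_one (r : ℝ) (q : ℝ) : P r 1 q = r * q ^ (r - 1) := by simp [P]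

lemma P_hasDerivAt (r : ℝ) (n : ℕ) {q : ℝ} (hq : 0 < q) :
    HasDerivAt (P r n) (P r (n + 1) q) q := by
  have h := (Real.hasDerivAt_rpow_const (x := q) (p := r - n) (Or.inl hq.ne')).const_mul
    (∏ i ∈ Finset.range n, (r - i))
  refine h.congr_deriv ?_
  rw [P, Finset.prod_range_succ]
  push_cast
  rw [show r - ((n:ℝ) + 1) = r - (n:ℝ) - 1 by ring]
  ring

lemma P_chain (r : ℝ) : ∀ n : ℕ, ∀ q : ℝ, 0 < q → HasDerivAt (P r n) (P r (n + 1) q) q :=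
  fun n q hq => P_hasDerivAt r n hq

/-- Complete monotonicity signs for `q ^ r`, `r ≤ 0`. -/
lemma P_alt {r : ℝ} (hr : r ≤ 0) (n : ℕ) {q : ℝ} (hq : 0 < q) :
    0 ≤ (-1 : ℝ) ^ n * P r n q := by
  have h1 : (-1 : ℝ) ^ n * (∏ i ∈ Finset.range n, (r - i)) =
      ∏ i ∈ Finset.range n, ((i : ℝ) - r) := by
    rw [show ((-1:ℝ)^n) = ∏ _i ∈ Finset.range n, (-1:ℝ) by
      rw [Finset.prod_const, Finset.card_range], ← Finset.prod_mul_distrib]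
    exact Finset.prod_congr rfl fun i _ => by ring
  have h2 : 0 ≤ ∏ i ∈ Finset.range n, ((i : ℝ) - r) :=
    Finset.prod_nonneg fun i _ => by
      have : (0:ℝ) ≤ i := Nat.cast_nonneg i
      linarith
  have h3 : 0 < q ^ (r - (n : ℝ)) := Real.rpow_pos_of_pos hq _
  calc (0:ℝ) ≤ (∏ i ∈ Finset.range n, ((i : ℝ) - r)) * q ^ (r - (n:ℝ)) :=
        mul_nonneg h2 h3.le
    _ = (-1 : ℝ) ^ n * P r n q := by rw [P, ← h1]; ring

/-- Bernstein signs for the shifted tower of `q ^ r`, `0 ≤ r ≤ 1`. -/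
lemma P_alt_shift {r : ℝ} (hr0 : 0 ≤ r) (hr1 : r ≤ 1) (n : ℕ) {q : ℝ} (hq : 0 < q) :
    0 ≤ (-1 : ℝ) ^ n * P r (n + 1) q := by
  have hprod : (∏ i ∈ Finset.range (n + 1), (r - i)) =
      (∏ i ∈ Finset.range n, (r - (i + 1 : ℕ))) * (r - (0 : ℕ)) :=
    Finset.prod_range_succ' (fun i => (r - i)) n
  have h1 : (-1 : ℝ) ^ n * (∏ i ∈ Finset.range n, (r - (i + 1 : ℕ))) =
      ∏ i ∈ Finset.range n, (((i : ℝ) + 1) - r) := by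
    rw [show ((-1:ℝ)^n) = ∏ _i ∈ Finset.range n, (-1:ℝ) by
      rw [Finset.prod_const, Finset.card_range], ← Finset.prod_mul_distrib]
    exact Finset.prod_congr rfl fun i _ => by push_cast; ring
  have h2 : 0 ≤ ∏ i ∈ Finset.range n, (((i : ℝ) + 1) - r) :=
    Finset.prod_nonneg fun i _ => by
      have : (0:ℝ) ≤ i := Nat.cast_nonneg i
      linarith
  have h3 : 0 < q ^ (r - ((n:ℝ) + 1)) := Real.rpow_pos_of_pos hq _
  have : (-1 : ℝ) ^ n * P r (n + 1) q =
      ((∏ i ∈ Finset.range n, (((i : ℝ) + 1) - r)) * r) * q ^ (r - ((n:ℝ) + 1)) := by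
    rw [P, hprod, ← h1]
    push_cast
    ring
  rw [this]
  exact mul_nonneg (mul_nonneg h2 hr0) h3.le

/-- Leibniz combination of two towers. -/
def L (A B : ℕ → ℝ → ℝ) (n : ℕ) (q : ℝ) : ℝ :=
  ∑ k ∈ Finset.range (n + 1), (n.choose k : ℝ) * A k q * B (n - k) q

lemma leib_id (a b : ℕ → ℝ) (n : ℕ) :
    ∑ k ∈ Finset.range (n + 2), ((n + 1).choose k : ℝ) * a k * b (n + 1 - k)
      = (∑ k ∈ Finset.range (n + 1), (n.choose k : ℝ) * a (k + 1) * b (n - k))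
        + ∑ k ∈ Finset.range (n + 1), (n.choose k : ℝ) * a k * b (n + 1 - k) := by
  rw [Finset.sum_range_succ' (fun k => ((n + 1).choose k : ℝ) * a k * b (n + 1 - k)) (n + 1)]
  have h1 : ∀ k ∈ Finset.range (n + 1),
      (((n + 1).choose (k + 1) : ℝ)) * a (k + 1) * b (n + 1 - (k + 1))
        = (n.choose k : ℝ) * a (k + 1) * b (n - k)
          + (n.choose (k + 1) : ℝ) * a (k + 1) * b (n - k) := by
    intro k _
    rw [Nat.succ_sub_succ, Nat.choose_succ_succ]
    push_cast
    ring
  rw [Finset.sum_congr rfl h1, Finset.sum_add_distrib]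
  have h2 : ∑ k ∈ Finset.range (n + 1), (n.choose k : ℝ) * a k * b (n + 1 - k)
      = (∑ k ∈ Finset.range n, (n.choose (k + 1) : ℝ) * a (k + 1) * b (n - k))
        + ((n.choose 0 : ℝ) * a 0 * b (n + 1)) := by
    rw [Finset.sum_range_succ' (fun k => (n.choose k : ℝ) * a k * b (n + 1 - k)) n]
    congr 1
    exact Finset.sum_congr rfl fun k _ => by rw [Nat.succ_sub_succ]
  have h4 : ∑ k ∈ Finset.range (n + 1), (n.choose (k + 1) : ℝ) * a (k + 1) * b (n - k)
      = ∑ k ∈ Finset.range n, (n.choose (k + 1) : ℝ) * a (k + 1) * b (n - k) := by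
    rw [Finset.sum_range_succ]; simp
  rw [h4, h2]
  simp [Nat.choose_zero_right]
  ring

lemma L_hasDerivAt (A B : ℕ → ℝ → ℝ) (n : ℕ) {q : ℝ}
    (hA : ∀ k, HasDerivAt (A k) (A (k + 1) q) q)
    (hB : ∀ k, k ≤ n → HasDerivAt (B k) (B (k + 1) q) q) :
    HasDerivAt (L A B n) (L A B (n + 1) q) q := by
  have h : HasDerivAt (L A B n)
      (∑ k ∈ Finset.range (n + 1),
        ((n.choose k : ℝ) * (A (k + 1) q * B (n - k) q)
          + (n.choose k : ℝ) * (A k q * B (n - k + 1) q))) q := by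
    apply HasDerivAt.fun_sum
    intro k hk
    have hk' : n - k ≤ n := Nat.sub_le n k
    have := ((hA k).mul (hB (n - k) hk')).const_mul (n.choose k : ℝ)
    simpa [mul_assoc, mul_add] using this
  have heq : (∑ k ∈ Finset.range (n + 1),
      ((n.choose k : ℝ) * (A (k + 1) q * B (n - k) q)
        + (n.choose k : ℝ) * (A k q * B (n - k + 1) q))) = L A B (n + 1) q := by
    rw [L, leib_id (fun k => A k q) (fun k => B k q) n]
    rw [Finset.sum_add_distrib]
    congr 1
    · exact Finset.sum_congr rfl fun k _ => by ring
    · refine Finset.sum_congr rfl fun k hk => ?_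
      have hk' : k ≤ n := Nat.lt_succ_iff.mp (Finset.mem_range.mp hk)
      rw [← Nat.sub_add_comm hk']
      ring
  rwa [heq] at h

lemma L_alt {A B : ℕ → ℝ → ℝ} {q : ℝ} (n : ℕ)
    (hA : ∀ k, 0 ≤ (-1:ℝ) ^ k * A k q) (hB : ∀ k, 0 ≤ (-1:ℝ) ^ k * B k q) :
    0 ≤ (-1 : ℝ) ^ n * L A B n q := by
  rw [L, Finset.mul_sum]
  apply Finset.sum_nonneg
  intro k hk
  have hk' : k ≤ n := Nat.lt_succ_iff.mp (Finset.mem_range.mp hk)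
  have hsplit : (-1 : ℝ) ^ n = (-1 : ℝ) ^ k * (-1 : ℝ) ^ (n - k) := by
    rw [← pow_add, Nat.add_sub_cancel' hk']
  have hc : (0:ℝ) ≤ (n.choose k : ℝ) := Nat.cast_nonneg _
  calc (0:ℝ) ≤ (n.choose k : ℝ) * (((-1:ℝ) ^ k * A k q) * ((-1:ℝ) ^ (n - k) * B (n - k) q)) :=
        mul_nonneg hc (mul_nonneg (hA k) (hB (n - k)))
    _ = (-1:ℝ) ^ n * ((n.choose k : ℝ) * A k q * B (n - k) q) := by rw [hsplit]; ring

/-- Tower of iterated derivatives of `exp ∘ g` given the tower `U` of derivatives of `g`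
(starting at `g'`). -/
def ET (U : ℕ → ℝ → ℝ) (E : ℝ → ℝ) : ℕ → ℝ → ℝ
  | 0 => E
  | (n + 1) => fun q => ∑ k ∈ Finset.range (n + 1), (n.choose k : ℝ) * U k q * ET U E (n - k) q
  decreasing_by exact Nat.lt_succ_of_le (Nat.sub_le n k)

lemma ET_zero (U : ℕ → ℝ → ℝ) (E : ℝ → ℝ) : ET U E 0 = E := by rw [ET]

lemma ET_succ (U : ℕ → ℝ → ℝ) (E : ℝ → ℝ) (n : ℕ) : ET U E (n + 1) = L U (ET U E) n := by
  funext q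
  rw [ET, L]

lemma ET_chain {U : ℕ → ℝ → ℝ} {E : ℝ → ℝ}
    (hU : ∀ k, ∀ q : ℝ, 0 < q → HasDerivAt (U k) (U (k + 1) q) q)
    (hE : ∀ q : ℝ, 0 < q → HasDerivAt E (U 0 q * E q) q) :
    ∀ n : ℕ, ∀ q : ℝ, 0 < q → HasDerivAt (ET U E n) (ET U E (n + 1) q) q := by
  intro n
  induction n using Nat.strong_induction_on with
  | _ n ih =>
    match n with
    | 0 =>
      intro q hq
      have h1 : ET U E 1 q = U 0 q * E q := by
        rw [ET_succ, L]
        simp [ET_zero]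
      rw [ET_zero, h1]
      exact hE q hq
    | (n + 1) =>
      intro q hq
      rw [ET_succ, ET_succ]
      exact L_hasDerivAt U (ET U E) n (fun k => hU k q hq)
        (fun k hk => ih k (Nat.lt_succ_of_le hk) q hq)

lemma ET_alt {U : ℕ → ℝ → ℝ} {E : ℝ → ℝ}
    (hU : ∀ k, ∀ q : ℝ, 0 < q → 0 ≤ (-1:ℝ) ^ (k + 1) * U k q)
    (hE : ∀ q : ℝ, 0 < q → 0 ≤ E q) :
    ∀ n : ℕ, ∀ q : ℝ, 0 < q → 0 ≤ (-1 : ℝ) ^ n * ET U E n q := by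
  intro n
  induction n using Nat.strong_induction_on with
  | _ n ih =>
    match n with
    | 0 => intro q hq; rw [ET_zero]; simpa using hE q hq
    | (n + 1) =>
      intro q hq
      rw [ET_succ, L, Finset.mul_sum]
      apply Finset.sum_nonneg
      intro k hk
      have hk' : k ≤ n := Nat.lt_succ_iff.mp (Finset.mem_range.mp hk)
      have hsplit : (-1 : ℝ) ^ (n + 1) = (-1 : ℝ) ^ (k + 1) * (-1 : ℝ) ^ (n - k) := by
        rw [← pow_add]
        congr 1
        omega
      have hc : (0:ℝ) ≤ (n.choose k : ℝ) := Nat.cast_nonneg _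
      have hT : 0 ≤ (-1:ℝ) ^ (n - k) * ET U E (n - k) q :=
        ih (n - k) (Nat.lt_succ_of_le (Nat.sub_le n k)) q hq
      calc (0:ℝ) ≤ (n.choose k : ℝ) *
            (((-1:ℝ) ^ (k + 1) * U k q) * ((-1:ℝ) ^ (n - k) * ET U E (n - k) q)) :=
            mul_nonneg hc (mul_nonneg (hU k q hq) hT)
        _ = (-1:ℝ) ^ (n + 1) * ((n.choose k : ℝ) * U k q * ET U E (n - k) q) := by
            rw [hsplit]; ring

lemma abs_eq_alt {z : ℝ} {m : ℕ} (h : 0 ≤ (-1:ℝ) ^ m * z) : |z| = (-1:ℝ) ^ m * z := by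
  rcases Nat.even_or_odd m with he | ho
  · rw [he.neg_one_pow] at h ⊢
    rw [one_mul] at h ⊢
    exact abs_of_nonneg h
  · rw [ho.neg_one_pow] at h ⊢
    rw [neg_one_mul] at h ⊢
    exact abs_of_nonpos (by linarith)

section Concrete

variable (α : ℝ)

/-- Tower of derivatives of `q ↦ -c * q^α`, starting at the first derivative. -/
def Uc (c : ℝ) (n : ℕ) (q : ℝ) : ℝ := -c * P α (n + 1) q

/-- `q ↦ exp (-c * q^α)`. -/
def Eexp (c : ℝ) (q : ℝ) : ℝ := Real.exp (-c * q ^ α)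

/-- Tower of derivatives of `q ↦ exp (-c * q^α)`. -/
def T (c : ℝ) : ℕ → ℝ → ℝ := ET (Uc α c) (Eexp α c)

/-- Tower of derivatives of `q ↦ q^(2α-1) * exp (-y * q^α)`. -/
def W (y : ℝ) : ℕ → ℝ → ℝ := L (P (2 * α - 1)) (T α y)

/-- Tower of derivatives of `q ↦ α x q^(α-1)(1 - exp (-x q^α))`,
written as `α x ∫_0^x q^(2α-1) e^{-y q^α} dy`. -/
def Kt (x : ℝ) (n : ℕ) (q : ℝ) : ℝ := α * x * ∫ y in (0:ℝ)..x, W α y n q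

variable {α}

lemma Uc_chain (c : ℝ) (k : ℕ) {q : ℝ} (hq : 0 < q) :
    HasDerivAt (Uc α c k) (Uc α c (k + 1) q) q :=
  (P_hasDerivAt α (k + 1) hq).const_mul (-c)

lemma Eexp_hasDerivAt (c : ℝ) {q : ℝ} (hq : 0 < q) :
    HasDerivAt (Eexp α c) (Uc α c 0 q * Eexp α c q) q := by
  have h2 : HasDerivAt (fun q : ℝ => -c * q ^ α) (-c * (α * q ^ (α - 1))) q :=
    (Real.hasDerivAt_rpow_const (x := q) (p := α) (Or.inl hq.ne')).const_mul (-c)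
  have h3 := h2.exp
  refine h3.congr_deriv ?_
  rw [Uc, P_one, Eexp]
  ring

lemma T_chain (c : ℝ) (n : ℕ) {q : ℝ} (hq : 0 < q) :
    HasDerivAt (T α c n) (T α c (n + 1) q) q :=
  ET_chain (fun k q hq => Uc_chain c k hq) (fun q hq => Eexp_hasDerivAt c hq) n q hq

lemma Uc_alt {c : ℝ} (hc : 0 ≤ c) (hα0 : 0 ≤ α) (hα1 : α ≤ 1) (k : ℕ) {q : ℝ} (hq : 0 < q) :
    0 ≤ (-1:ℝ) ^ (k + 1) * Uc α c k q := by
  have h := P_alt_shift hα0 hα1 k hq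
  have : (-1:ℝ) ^ (k + 1) * Uc α c k q = c * ((-1:ℝ) ^ k * P α (k + 1) q) := by
    rw [Uc, pow_succ]
    ring
  rw [this]
  exact mul_nonneg hc h

lemma T_alt {c : ℝ} (hc : 0 ≤ c) (hα0 : 0 ≤ α) (hα1 : α ≤ 1) (n : ℕ) {q : ℝ} (hq : 0 < q) :
    0 ≤ (-1:ℝ) ^ n * T α c n q :=
  ET_alt (fun k q hq => Uc_alt hc hα0 hα1 k hq)
    (fun q _ => le_of_lt (Real.exp_pos _)) n q hq

lemma T_cont (n : ℕ) (q : ℝ) : Continuous fun c => T α c n q := by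
  induction n using Nat.strong_induction_on with
  | _ n ih =>
    match n with
    | 0 =>
      show Continuous fun c => ET (Uc α c) (Eexp α c) 0 q
      simp only [ET_zero, Eexp]
      fun_prop
    | (n + 1) =>
      have heq : (fun c => T α c (n + 1) q)
          = fun c => ∑ k ∈ Finset.range (n + 1),
              (n.choose k : ℝ) * (-c * P α (k + 1) q) * T α c (n - k) q := by
        funext c
        show ET (Uc α c) (Eexp α c) (n + 1) q = _
        rw [ET_succ, L]
        rfl
      rw [heq]
      apply continuous_finset_sum
      intro k _
      exact ((continuous_const.mul ((continuous_id.neg).mul continuous_const)).mul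
        (ih (n - k) (Nat.lt_succ_of_le (Nat.sub_le n k))))

lemma W_chain (y : ℝ) (n : ℕ) {q : ℝ} (hq : 0 < q) :
    HasDerivAt (W α y n) (W α y (n + 1) q) q :=
  L_hasDerivAt _ _ n (fun k => P_hasDerivAt (2 * α - 1) k hq)
    (fun k _ => T_chain y k hq)

lemma W_alt {y : ℝ} (hy : 0 ≤ y) (hα0 : 0 ≤ α) (hα2 : α ≤ 1/2) (n : ℕ) {q : ℝ} (hq : 0 < q) :
    0 ≤ (-1:ℝ) ^ n * W α y n q :=
  L_alt n (fun k => P_alt (by linarith) k hq)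
    (fun k => T_alt hy hα0 (by linarith) k hq)

lemma W_cont (n : ℕ) (q : ℝ) : Continuous fun y => W α y n q := by
  unfold W L
  apply continuous_finset_sum
  intro k _
  exact (continuous_const.mul (T_cont (n - k) q))

lemma W_zero_eval (y q : ℝ) : W α y 0 q = q ^ (2 * α - 1) * Real.exp (-y * q ^ α) := by
  rw [W, L]
  simp [T, ET_zero, Eexp, P_zero]

lemma W_zero_le {y q t : ℝ} (hy : 0 ≤ y) (ht : 0 < t) (htq : t ≤ q) (hα2 : α ≤ 1/2) :
    W α y 0 q ≤ t ^ (2 * α - 1) := by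
  rw [W_zero_eval]
  have hq : 0 < q := lt_of_lt_of_le ht htq
  have h1 : q ^ (2 * α - 1) ≤ t ^ (2 * α - 1) :=
    Real.rpow_le_rpow_of_nonpos ht htq (by linarith)
  have h2 : Real.exp (-y * q ^ α) ≤ 1 := by
    rw [Real.exp_le_one_iff]
    have : 0 ≤ y * q ^ α := mul_nonneg hy (Real.rpow_pos_of_pos hq α).le
    linarith
  calc q ^ (2 * α - 1) * Real.exp (-y * q ^ α) ≤ q ^ (2 * α - 1) * 1 := by
        apply mul_le_mul_of_nonneg_left h2 (Real.rpow_pos_of_pos hq _).le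
    _ = q ^ (2 * α - 1) := mul_one _
    _ ≤ t ^ (2 * α - 1) := h1

end Concrete

section KtLemmas

variable {α : ℝ}

lemma Kt_eval_zero {q : ℝ} (hq : 0 < q) (x : ℝ) :
    Kt α x 0 q = α * x * q ^ (α - 1) * (1 - Real.exp (-x * q ^ α)) := by
  have hqα : (0:ℝ) < q ^ α := Real.rpow_pos_of_pos hq α
  have hF : ∀ y ∈ uIcc (0:ℝ) x,
      HasDerivAt (fun y => q ^ (2 * α - 1) * (-(q ^ α)⁻¹ * Real.exp (-y * q ^ α)))
        (W α y 0 q) y := by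
    intro y _
    have h1 : HasDerivAt (fun y : ℝ => -y * q ^ α) (-1 * q ^ α) y :=
      (hasDerivAt_id y).neg.mul_const _
    have h2 := (h1.exp.const_mul (-(q ^ α)⁻¹)).const_mul (q ^ (2 * α - 1))
    refine h2.congr_deriv ?_
    rw [W_zero_eval]
    field_simp
  have hint : ∫ y in (0:ℝ)..x, W α y 0 q
      = q ^ (2 * α - 1) * (-(q ^ α)⁻¹ * Real.exp (-x * q ^ α))
        - q ^ (2 * α - 1) * (-(q ^ α)⁻¹ * Real.exp (-(0:ℝ) * q ^ α)) :=
    intervalIntegral.integral_eq_sub_of_hasDerivAt hF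
      ((W_cont 0 q).intervalIntegrable 0 x)
  rw [Kt, hint]
  have hpow : q ^ (2 * α - 1) * (q ^ α)⁻¹ = q ^ (α - 1) := by
    rw [← Real.rpow_neg hq.le, ← Real.rpow_add hq]
    congr 1
    ring
  have : q ^ (2 * α - 1) * (-(q ^ α)⁻¹ * Real.exp (-x * q ^ α))
        - q ^ (2 * α - 1) * (-(q ^ α)⁻¹ * Real.exp (-(0:ℝ) * q ^ α))
      = (q ^ (2 * α - 1) * (q ^ α)⁻¹) * (1 - Real.exp (-x * q ^ α)) := by
    simp
    ring
  rw [this, hpow]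
  ring

lemma Kt_as_setIntegral {x : ℝ} (hx : 0 ≤ x) (n : ℕ) :
    Kt α x n = fun q => α * x * ∫ y in Ioc (0:ℝ) x, W α y n q := by
  funext q
  rw [Kt, intervalIntegral.integral_of_le hx]

lemma Kt_chain (hα : 0 < α) (hα2 : α ≤ 1/2) {x : ℝ} (hx : 0 ≤ x) (n : ℕ) {q : ℝ}
    (hq : 0 < q) : HasDerivAt (Kt α x n) (Kt α x (n + 1) q) q := by
  have hεpos : (0:ℝ) < q / 2 := by linarith
  set μ := volume.restrict (Ioc (0:ℝ) x) with hμ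
  set h : ℝ := q / (4 * (n + 1)) with hh
  have hhpos : 0 < h := by positivity
  have hstep : ((n:ℝ) + 1) * h = q / 4 := by
    rw [hh]
    field_simp
  set bound : ℝ → ℝ := fun _ => (h⁻¹) ^ (n + 1) * (q / 4) ^ (2 * α - 1) with hbound
  have h_bound : ∀ᵐ y ∂μ, ∀ q' ∈ Metric.ball q (q / 2), ‖W α y (n + 1) q'‖ ≤ bound y := by
    refine (ae_restrict_mem measurableSet_Ioc).mono fun y hy => ?_
    intro q' hq'
    rw [Real.norm_eq_abs, abs_eq_alt (W_alt hy.1.le hα.le hα2 (n + 1)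
      (by rw [Metric.mem_ball, Real.dist_eq] at hq'; cases' abs_lt.1 hq' with h1 h2; linarith))]
    rw [Metric.mem_ball, Real.dist_eq] at hq'
    cases' abs_lt.1 hq' with hq'1 hq'2
    have hq'pos : 0 < q' := by linarith
    have hlt : ((n + 1 : ℕ):ℝ) * h < q' := by push_cast; rw [hstep]; linarith
    have hcb := chain_bound (fun m t ht => W_chain y m ht)
      (fun m t ht => W_alt hy.1.le hα.le hα2 m ht) (n + 1) q' h hhpos hlt
    refine hcb.trans ?_
    have hW0 : W α y 0 (q' - ((n + 1 : ℕ):ℝ) * h) ≤ (q / 4) ^ (2 * α - 1) := by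
      apply W_zero_le hy.1.le (by linarith) ?_ hα2
      push_cast
      rw [hstep]
      linarith
    rw [hbound]
    apply mul_le_mul_of_nonneg_left hW0
    positivity
  haveI : IsFiniteMeasure μ := by
    constructor
    rw [hμ, Measure.restrict_apply_univ]
    exact lt_of_le_of_lt (le_of_eq (Real.volume_Ioc)) ENNReal.ofReal_lt_top
  have key := hasDerivAt_integral_of_dominated_loc_of_deriv_le (μ := μ)
    (F := fun q' y => W α y n q') (F' := fun q' y => W α y (n + 1) q')
    (x₀ := q) (bound := bound) (Metric.ball_mem_nhds q hεpos)
    (Filter.Eventually.of_forall fun q' => (W_cont n q').aestronglyMeasurable)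
    ((W_cont n q).integrableOn_Ioc)
    ((W_cont (n + 1) q).aestronglyMeasurable)
    h_bound
    (integrable_const _)
    (Filter.Eventually.of_forall fun y => fun q' hq' => by
      rw [Metric.mem_ball, Real.dist_eq] at hq'
      cases' abs_lt.1 hq' with h1 h2
      exact W_chain y n (by linarith))
  rw [Kt_as_setIntegral hx n, Kt_as_setIntegral hx (n + 1)]
  exact (key.2).const_mul (α * x)

lemma Kt_alt (hα : 0 < α) (hα2 : α ≤ 1/2) {x : ℝ} (hx : 0 ≤ x) (n : ℕ) {q : ℝ} (hq : 0 < q) :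
    0 ≤ (-1:ℝ) ^ n * Kt α x n q := by
  rw [Kt_as_setIntegral hx n]
  have : (-1:ℝ) ^ n * (α * x * ∫ y in Ioc (0:ℝ) x, W α y n q)
      = α * x * ∫ y in Ioc (0:ℝ) x, (-1:ℝ) ^ n * W α y n q := by
    rw [integral_const_mul]
    ring
  rw [this]
  apply mul_nonneg (by positivity)
  apply setIntegral_nonneg measurableSet_Ioc
  intro y hy
  exact W_alt hy.1.le hα.le hα2 n hq

end KtLemmas

section Outer

variable {α : ℝ}

lemma integrand_nonneg (s x : ℝ) : 0 ≤ Real.exp (-s * x) - 1 + s * x := by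
  have h := Real.add_one_le_exp (-s * x)
  linarith

lemma integrand_le {s x : ℝ} (hs : 0 ≤ s) (hx : 0 ≤ x) :
    Real.exp (-s * x) - 1 + s * x ≤ max s (s ^ 2) * min x (x ^ 2) := by
  have hu0 : 0 ≤ s * x := mul_nonneg hs hx
  have hexple : Real.exp (-(s * x)) ≤ 1 := Real.exp_le_one_iff.2 (by linarith)
  have hle_u : Real.exp (-s * x) - 1 + s * x ≤ s * x := by
    rw [neg_mul]
    linarith
  have hle_u2 : Real.exp (-s * x) - 1 + s * x ≤ (s * x) ^ 2 := by
    rcases le_or_gt (s * x) 1 with h1 | h1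
    · have habs := Real.abs_exp_sub_one_sub_id_le (x := -(s * x))
        (by rw [abs_neg, abs_of_nonneg hu0]; exact h1)
      have h2 : Real.exp (-(s * x)) - 1 + s * x ≤ |Real.exp (-(s * x)) - 1 - (-(s * x))| := by
        have := le_abs_self (Real.exp (-(s * x)) - 1 - (-(s * x)))
        linarith
      have h3 : (-(s * x)) ^ 2 = (s * x) ^ 2 := by ring
      rw [neg_mul]
      linarith
    · nlinarith
  rcases le_total x 1 with hx1 | hx1
  · have hmin : min x (x ^ 2) = x ^ 2 := min_eq_right (by nlinarith)
    rw [hmin]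
    have hmax : s ^ 2 ≤ max s (s ^ 2) := le_max_right _ _
    nlinarith [sq_nonneg x]
  · have hmin : min x (x ^ 2) = x := min_eq_left (by nlinarith)
    rw [hmin]
    have hmax : s ≤ max s (s ^ 2) := le_max_left _ _
    nlinarith

lemma Kt_zero_le (hα : 0 < α) (hα2 : α ≤ 1/2) {x : ℝ} (hx : 0 ≤ x) {s t : ℝ}
    (ht : 0 < t) (hts : t ≤ s) :
    Kt α x 0 s ≤ α * max (t ^ (α - 1)) (t ^ (2 * α - 1)) * min x (x ^ 2) := by
  have hs : 0 < s := lt_of_lt_of_le ht hts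
  rw [Kt_eval_zero hs x]
  have hsα : (0:ℝ) < s ^ α := Real.rpow_pos_of_pos hs α
  have hsα1 : (0:ℝ) < s ^ (α - 1) := Real.rpow_pos_of_pos hs _
  have hexp1 : 1 - Real.exp (-x * s ^ α) ≤ 1 := by
    have := Real.exp_pos (-x * s ^ α)
    linarith
  have hexp2 : 1 - Real.exp (-x * s ^ α) ≤ x * s ^ α := by
    have := Real.add_one_le_exp (-x * s ^ α)
    linarith
  have hexp0 : 0 ≤ 1 - Real.exp (-x * s ^ α) := by
    have : Real.exp (-x * s ^ α) ≤ 1 :=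
      Real.exp_le_one_iff.2 (by nlinarith)
    linarith
  have hs1 : s ^ (α - 1) ≤ t ^ (α - 1) :=
    Real.rpow_le_rpow_of_nonpos ht hts (by linarith)
  have hs2 : s ^ (2 * α - 1) ≤ t ^ (2 * α - 1) :=
    Real.rpow_le_rpow_of_nonpos ht hts (by linarith)
  have hmax1 : t ^ (α - 1) ≤ max (t ^ (α - 1)) (t ^ (2 * α - 1)) := le_max_left _ _
  have hmax2 : t ^ (2 * α - 1) ≤ max (t ^ (α - 1)) (t ^ (2 * α - 1)) := le_max_right _ _
  rcases le_total x 1 with hx1 | hx1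
  · have hmin : min x (x ^ 2) = x ^ 2 := min_eq_right (by nlinarith)
    rw [hmin]
    have hkey : α * x * s ^ (α - 1) * (1 - Real.exp (-x * s ^ α))
        ≤ α * x * s ^ (α - 1) * (x * s ^ α) := by
      apply mul_le_mul_of_nonneg_left hexp2 (by positivity)
    have heq : α * x * s ^ (α - 1) * (x * s ^ α) = α * (s ^ (α - 1) * s ^ α) * x ^ 2 := by
      ring
    have hpow : s ^ (α - 1) * s ^ α = s ^ (2 * α - 1) := by
      rw [← Real.rpow_add hs]
      congr 1
      ring
    calc α * x * s ^ (α - 1) * (1 - Real.exp (-x * s ^ α))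
        ≤ α * (s ^ (α - 1) * s ^ α) * x ^ 2 := by rw [← heq]; exact hkey
      _ = α * s ^ (2 * α - 1) * x ^ 2 := by rw [hpow]
      _ ≤ α * max (t ^ (α - 1)) (t ^ (2 * α - 1)) * x ^ 2 := by
          apply mul_le_mul_of_nonneg_right ?_ (sq_nonneg x)
          apply mul_le_mul_of_nonneg_left (hs2.trans hmax2) hα.le
  · have hmin : min x (x ^ 2) = x := min_eq_left (by nlinarith)
    rw [hmin]
    calc α * x * s ^ (α - 1) * (1 - Real.exp (-x * s ^ α))
        ≤ α * x * s ^ (α - 1) * 1 := by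
          apply mul_le_mul_of_nonneg_left hexp1 (by positivity)
      _ = α * s ^ (α - 1) * x := by ring
      _ ≤ α * max (t ^ (α - 1)) (t ^ (2 * α - 1)) * x := by
          apply mul_le_mul_of_nonneg_right ?_ (by linarith)
          apply mul_le_mul_of_nonneg_left (hs1.trans hmax1) hα.le

lemma Kt_cont_x (n : ℕ) (q : ℝ) : Continuous fun x => Kt α x n q := by
  unfold Kt
  exact (continuous_const.mul continuous_id).mul
    (intervalIntegral.continuous_primitive
      (fun a b => (W_cont n q).intervalIntegrable a b) 0)

lemma Kt_abs_bound (hα : 0 < α) (hα2 : α ≤ 1/2) {x : ℝ} (hx : 0 ≤ x) (n : ℕ)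
    {q' t h : ℝ} (hh : 0 < h) (ht : 0 < t) (hlt : (n:ℝ) * h < q')
    (hts : t ≤ q' - n * h) :
    |Kt α x n q'| ≤ (h⁻¹) ^ n *
      (α * max (t ^ (α - 1)) (t ^ (2 * α - 1)) * min x (x ^ 2)) := by
  have hq' : 0 < q' := by
    have : (0:ℝ) ≤ (n:ℝ) * h := mul_nonneg (Nat.cast_nonneg n) hh.le
    linarith
  rw [abs_eq_alt (Kt_alt hα hα2 hx n hq')]
  refine (chain_bound (fun m t ht => Kt_chain hα hα2 hx m ht)
    (fun m t ht => Kt_alt hα hα2 hx m ht) n q' h hh hlt).trans ?_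
  apply mul_le_mul_of_nonneg_left (Kt_zero_le hα hα2 hx ht hts) (by positivity)

lemma ae_pos {Pi : Measure ℝ} (hPi0 : Pi (Iic 0) = 0) : ∀ᵐ x ∂Pi, 0 < x := by
  rw [ae_iff]
  have : {x : ℝ | ¬ 0 < x} = Iic 0 := by ext x; simp
  rw [this, hPi0]

lemma integrable_min_sq {Pi : Measure ℝ} (hPi0 : Pi (Iic 0) = 0)
    (hPifin : (∫⁻ x, ENNReal.ofReal (min x (x ^ 2)) ∂Pi) < ⊤) :
    Integrable (fun x => min x (x ^ 2)) Pi := by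
  refine ⟨(continuous_id.min (continuous_pow 2)).aestronglyMeasurable, ?_⟩
  rw [hasFiniteIntegral_iff_ofReal ((ae_pos hPi0).mono fun x hx =>
    le_min hx.le (sq_nonneg x))]
  exact hPifin

lemma It_chain (hα : 0 < α) (hα2 : α ≤ 1/2) {Pi : Measure ℝ} (hPi0 : Pi (Iic 0) = 0)
    (hPifin : (∫⁻ x, ENNReal.ofReal (min x (x ^ 2)) ∂Pi) < ⊤) (n : ℕ) {q : ℝ} (hq : 0 < q) :
    HasDerivAt (fun q => ∫ x, Kt α x n q ∂Pi) (∫ x, Kt α x (n + 1) q ∂Pi) q := by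
  have hεpos : (0:ℝ) < q / 2 := by linarith
  set h : ℝ := q / (4 * (n + 1)) with hh
  have hhpos : 0 < h := by positivity
  have hstep : ((n:ℝ) + 1) * h = q / 4 := by
    rw [hh]; field_simp
  set C : ℝ := (h⁻¹) ^ (n + 1) * (α * max ((q/4) ^ (α - 1)) ((q/4) ^ (2 * α - 1))) with hC
  have hCpos : 0 ≤ C := by positivity
  have h_bound : ∀ᵐ x ∂Pi, ∀ q' ∈ Metric.ball q (q / 2),
      ‖Kt α x (n + 1) q'‖ ≤ C * min x (x ^ 2) := by
    refine (ae_pos hPi0).mono fun x hx q' hq' => ?_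
    rw [Metric.mem_ball, Real.dist_eq] at hq'
    cases' abs_lt.1 hq' with h1 h2
    have hb := Kt_abs_bound hα hα2 hx.le (n + 1) hhpos
      (show (0:ℝ) < q / 4 by linarith)
      (show ((n + 1 : ℕ):ℝ) * h < q' by push_cast; rw [hstep]; linarith)
      (show q / 4 ≤ q' - ((n + 1 : ℕ):ℝ) * h by push_cast; rw [hstep]; linarith)
    rw [Real.norm_eq_abs]
    refine hb.trans (le_of_eq ?_)
    rw [hC]; ring
  have hint_bound : Integrable (fun x => C * min x (x ^ 2)) Pi :=
    (integrable_min_sq hPi0 hPifin).const_mul C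
  have hF_int : Integrable (fun x => Kt α x n q) Pi := by
    set h2 : ℝ := q / (2 * (n + 1)) with hh2
    have hh2pos : 0 < h2 := by positivity
    have hn2 : (n:ℝ) * h2 ≤ q / 2 := by
      rw [hh2, ← mul_div_assoc,
        div_le_div_iff₀ (by positivity) (by norm_num : (0:ℝ) < 2)]
      have : (0:ℝ) ≤ (n:ℝ) := Nat.cast_nonneg n
      nlinarith
    apply Integrable.mono' ((integrable_min_sq hPi0 hPifin).const_mul
      ((h2⁻¹) ^ n * (α * max ((q/2) ^ (α - 1)) ((q/2) ^ (2 * α - 1)))))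
      (Kt_cont_x n q).aestronglyMeasurable
    refine (ae_pos hPi0).mono fun x hx => ?_
    rw [Real.norm_eq_abs]
    refine (Kt_abs_bound hα hα2 hx.le n hh2pos
      (show (0:ℝ) < q / 2 by linarith)
      (show (n:ℝ) * h2 < q by linarith)
      (show q / 2 ≤ q - (n:ℝ) * h2 by linarith)).trans (le_of_eq ?_)
    ring
  have key := hasDerivAt_integral_of_dominated_loc_of_deriv_le (μ := Pi)
    (F := fun q' x => Kt α x n q') (F' := fun q' x => Kt α x (n + 1) q')
    (x₀ := q) (bound := fun x => C * min x (x ^ 2)) (Metric.ball_mem_nhds q hεpos)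
    (Filter.Eventually.of_forall fun q' => (Kt_cont_x n q').aestronglyMeasurable)
    hF_int
    ((Kt_cont_x (n + 1) q).aestronglyMeasurable)
    h_bound
    hint_bound
    ((ae_pos hPi0).mono fun x hx q' hq' => by
      rw [Metric.mem_ball, Real.dist_eq] at hq'
      cases' abs_lt.1 hq' with h1 h2
      exact Kt_chain hα hα2 hx.le n (by linarith))
  exact key.2

lemma It_alt (hα : 0 < α) (hα2 : α ≤ 1/2) {Pi : Measure ℝ} (hPi0 : Pi (Iic 0) = 0)
    (n : ℕ) {q : ℝ} (hq : 0 < q) :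
    0 ≤ (-1:ℝ) ^ n * ∫ x, Kt α x n q ∂Pi := by
  rw [← integral_const_mul]
  apply integral_nonneg_of_ae
  exact (ae_pos hPi0).mono fun x hx => Kt_alt hα hα2 hx.le n hq

end Outer


lemma isBernstein_of_chain (f : ℝ → ℝ) (H : ℕ → ℝ → ℝ)
    (h0 : ∀ q : ℝ, 0 < q → 0 ≤ f q)
    (hf : ∀ q : ℝ, 0 < q → HasDerivAt f (H 0 q) q)
    (hC : Chain H) (hA : Alt H) : IsBernstein f := by
  set F : ℕ → ℝ → ℝ := fun n => Nat.rec f (fun k _ => H k) n with hF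
  have hCF : Chain F := by
    intro n q hq
    match n with
    | 0 => exact hf q hq
    | (m + 1) => exact hC m q hq
  refine ⟨?_, fun q hq => h0 q hq, ?_⟩
  · exact chain_contDiffOn hCF
  · intro n hn q hq
    obtain ⟨m, rfl⟩ : ∃ m, n = m + 1 := ⟨n - 1, (Nat.succ_pred_eq_of_pos hn).symm⟩
    have h2 : iteratedDerivWithin (m + 1) f (Ioi 0) q = H m q :=
      chain_iteratedDerivWithin hCF (m + 1) q hq
    rw [Nat.add_sub_cancel, h2]
    exact hA m q hq

lemma integrand_hasDerivAt {α : ℝ} (hα : 0 < α) {x : ℝ} {q : ℝ} (hq : 0 < q) :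
    HasDerivAt (fun q : ℝ => Real.exp (-(q ^ α) * x) - 1 + q ^ α * x)
      (Kt α x 0 q) q := by
  have h1 : HasDerivAt (fun q : ℝ => q ^ α) (α * q ^ (α - 1)) q :=
    Real.hasDerivAt_rpow_const (Or.inl hq.ne')
  have h2 : HasDerivAt (fun q : ℝ => -(q ^ α) * x) (-(α * q ^ (α - 1)) * x) q :=
    h1.neg.mul_const x
  have h4 := (h2.exp.sub_const 1).add (h1.mul_const x)
  refine h4.congr_deriv ?_
  rw [Kt_eval_zero hq]
  rw [show -x * q ^ α = -(q ^ α) * x by ring]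
  ring

end BernAux

open BernAux

/-- For `α ∈ (0, 1/2]` and any (sub)critical branching mechanism `Ψ`,
the function `q ↦ Ψ(q^α)` is a Bernstein function. -/
theorem branching_comp_rpow_isBernstein
    (α : ℝ) (hα : α ∈ Set.Ioc (0:ℝ) (1/2))
    (Ψ : ℝ → ℝ) (hΨ : IsBranchingMechanism Ψ) :
    IsBernstein (fun q => Ψ (q ^ α)) := by
  obtain ⟨hα0, hα2⟩ := hα
  obtain ⟨a, b, Pi, ha, hb, hPi0, hPifin, hΨeq⟩ := hΨ
  set H : ℕ → ℝ → ℝ := fun n q =>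
    a * P α (n + 1) q + b * P (α * 2) (n + 1) q + ∫ x, Kt α x n q ∂Pi with hH
  have hC : Chain H := by
    intro n q hq
    exact (((P_hasDerivAt α (n + 1) hq).const_mul a).add
      ((P_hasDerivAt (α * 2) (n + 1) hq).const_mul b)).add
      (It_chain hα0 hα2 hPi0 hPifin n hq)
  have hA : Alt H := by
    intro n q hq
    have h1 := P_alt_shift hα0.le (by linarith) n hq
    have h2 := P_alt_shift (by linarith : (0:ℝ) ≤ α * 2) (by linarith) n hq
    have h3 := It_alt hα0 hα2 hPi0 n hq
    have heq : (-1:ℝ) ^ n * H n q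
        = a * ((-1:ℝ) ^ n * P α (n + 1) q) + b * ((-1:ℝ) ^ n * P (α * 2) (n + 1) q)
          + (-1:ℝ) ^ n * ∫ x, Kt α x n q ∂Pi := by
      rw [hH]; ring
    rw [heq]
    have := mul_nonneg ha h1
    have := mul_nonneg hb h2
    linarith
  apply isBernstein_of_chain _ H
  · -- nonnegativity
    intro q hq
    have hs : 0 < q ^ α := Real.rpow_pos_of_pos hq α
    rw [hΨeq (q ^ α) hs]
    have h1 : 0 ≤ a * q ^ α := mul_nonneg ha hs.le
    have h2 : 0 ≤ b * (q ^ α) ^ 2 := mul_nonneg hb (sq_nonneg _)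
    have h3 : 0 ≤ ∫ x, (Real.exp (-(q ^ α) * x) - 1 + q ^ α * x) ∂Pi :=
      integral_nonneg fun x => integrand_nonneg _ _
    linarith
  · -- derivative at level 0
    intro q hq
    have hfeq : (fun q' => Ψ (q' ^ α)) =ᶠ[nhds q]
        (fun q' => a * q' ^ α + b * q' ^ (α * 2)
          + ∫ x, (Real.exp (-(q' ^ α) * x) - 1 + q' ^ α * x) ∂Pi) := by
      filter_upwards [isOpen_Ioi.mem_nhds hq] with q' hq'
      have hs : 0 < q' ^ α := Real.rpow_pos_of_pos hq' α
      rw [hΨeq (q' ^ α) hs]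
      congr 1
      · congr 1
        rw [← Real.rpow_natCast (q' ^ α) 2, ← Real.rpow_mul (le_of_lt hq')]
        norm_num
    -- derivative of the explicit representative
    have hP0 : HasDerivAt (fun q' : ℝ => q' ^ α) (P α 1 q) q := by
      have := P_hasDerivAt α 0 hq
      have heq : P α 0 = fun q : ℝ => q ^ α := by
        funext t; exact P_zero α t
      rwa [heq] at this
    have hP0' : HasDerivAt (fun q' : ℝ => q' ^ (α * 2)) (P (α * 2) 1 q) q := by
      have := P_hasDerivAt (α * 2) 0 hq
      have heq : P (α * 2) 0 = fun q : ℝ => q ^ (α * 2) := by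
        funext t; exact P_zero (α * 2) t
      rwa [heq] at this
    -- derivative of the integral term
    have hεpos : (0:ℝ) < q / 2 := by linarith
    have hG : HasDerivAt (fun q' => ∫ x, (Real.exp (-(q' ^ α) * x) - 1 + q' ^ α * x) ∂Pi)
        (∫ x, Kt α x 0 q ∂Pi) q := by
      set C : ℝ := α * max ((q/2) ^ (α - 1)) ((q/2) ^ (2 * α - 1)) with hCdef
      have h_bound : ∀ᵐ x ∂Pi, ∀ q' ∈ Metric.ball q (q / 2),
          ‖Kt α x 0 q'‖ ≤ C * min x (x ^ 2) := by
        refine (ae_pos hPi0).mono fun x hx q' hq' => ?_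
        rw [Metric.mem_ball, Real.dist_eq] at hq'
        cases' abs_lt.1 hq' with h1 h2
        have hq'pos : 0 < q' := by linarith
        rw [Real.norm_eq_abs, abs_eq_alt (Kt_alt hα0 hα2 hx.le 0 hq'pos)]
        rw [pow_zero, one_mul]
        refine (Kt_zero_le hα0 hα2 hx.le hεpos (by linarith : q / 2 ≤ q')).trans
          (le_of_eq ?_)
        rw [hCdef]
      have hF_int : ∀ s : ℝ, 0 ≤ s →
          Integrable (fun x => Real.exp (-s * x) - 1 + s * x) Pi := by
        intro s hs
        apply Integrable.mono' ((integrable_min_sq hPi0 hPifin).const_mul (max s (s ^ 2)))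
        · apply Continuous.aestronglyMeasurable
          fun_prop
        · refine (ae_pos hPi0).mono fun x hx => ?_
          rw [Real.norm_eq_abs, abs_of_nonneg (integrand_nonneg s x)]
          exact integrand_le hs hx.le
      have key := hasDerivAt_integral_of_dominated_loc_of_deriv_le (μ := Pi)
        (F := fun q' x => Real.exp (-(q' ^ α) * x) - 1 + q' ^ α * x)
        (F' := fun q' x => Kt α x 0 q')
        (x₀ := q) (bound := fun x => C * min x (x ^ 2)) (Metric.ball_mem_nhds q hεpos)
        (Filter.Eventually.of_forall fun q' => by
          apply Continuous.aestronglyMeasurable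
          fun_prop)
        (hF_int (q ^ α) (Real.rpow_pos_of_pos hq α).le)
        ((Kt_cont_x 0 q).aestronglyMeasurable)
        h_bound
        ((integrable_min_sq hPi0 hPifin).const_mul C)
        ((ae_pos hPi0).mono fun x hx q' hq' => by
          rw [Metric.mem_ball, Real.dist_eq] at hq'
          cases' abs_lt.1 hq' with h1 h2
          exact integrand_hasDerivAt hα0 (by linarith))
      exact key.2
    have htotal := ((hP0.const_mul a).add (hP0'.const_mul b)).add hG
    exact HasDerivAt.congr_of_eventuallyEq htotal hfeq
  · exact hC
  · exact hA
end
end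

section
/- Let Φ(q) = a + b q + ∫_{(0,∞)} (1 − e^{−qx}) Λ(dx) for q > 0, where a, b ≥ 0 and Λ is a measure on (0,∞) with ∫_{(0,∞)} min(x, 1) Λ(dx) < ∞. If the function q ↦ Φ(q)² is a Bernstein function, then b = 0. -/
open MeasureTheory Real Set

noncomputable section

/-- If `Φ(q) = a + bq + ∫ (1 - e^(-qx)) Λ(dx)` with `a, b ≥ 0` and
`∫ min(x,1) Λ(dx) < ∞`, and if `Φ²` is a Bernstein function, then `b = 0`. -/
theorem sq_isBernstein_drift_zero
    (a b : ℝ) (ha : 0 ≤ a) (hb : 0 ≤ b)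
    (Λ : Measure ℝ) (hΛ0 : Λ (Iic 0) = 0)
    (hΛ : (∫⁻ x, ENNReal.ofReal (min x 1) ∂Λ) < ⊤)
    (Φ : ℝ → ℝ)
    (hΦ : ∀ q > (0:ℝ), Φ q = a + b * q + ∫ x, (1 - Real.exp (-q * x)) ∂Λ)
    (hΦ2 : IsBernstein (fun q => (Φ q) ^ 2)) :
    b = 0 := by
  set f : ℝ → ℝ := fun q => (Φ q) ^ 2 with hf
  -- f is concave on (0,∞)
  have hdiff : DifferentiableOn ℝ f (Ioi 0) :=
    hΦ2.1.differentiableOn (by simp)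
  have hc1 : ContDiffOn ℝ 1 (deriv f) (Ioi 0) :=
    hΦ2.1.deriv_of_isOpen isOpen_Ioi (by norm_cast)
  have hdiff' : DifferentiableOn ℝ (deriv f) (Ioi 0) := hc1.differentiableOn one_ne_zero
  have hf2 : ∀ x ∈ Ioi (0:ℝ), deriv^[2] f x ≤ 0 := by
    intro x hx
    have h := hΦ2.2.2 2 (by norm_num) x hx
    have heq : iteratedDerivWithin 2 f (Ioi 0) x = deriv^[2] f x := by
      rw [iteratedDerivWithin_eq_iteratedFDerivWithin,
        iteratedFDerivWithin_of_isOpen 2 isOpen_Ioi hx,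
        ← iteratedDeriv_eq_iteratedFDeriv, iteratedDeriv_eq_iterate]
    rw [heq] at h
    simpa using h
  have hconc : ConcaveOn ℝ (Ioi 0) f :=
    concaveOn_of_deriv2_nonpos' (convex_Ioi 0) hdiff hdiff' hf2
  -- lower bound: b^2 q^2 ≤ f q for q > 0
  have hae : ∀ᵐ x ∂Λ, 0 < x := by
    rw [ae_iff]
    have : {x : ℝ | ¬ 0 < x} = Iic 0 := by ext x; simp
    rwa [this]
  have hlow : ∀ q > (0:ℝ), b ^ 2 * q ^ 2 ≤ f q := by
    intro q hq
    have hint : 0 ≤ ∫ x, (1 - Real.exp (-q * x)) ∂Λ := by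
      apply integral_nonneg_of_ae
      filter_upwards [hae] with x hx
      simp only [Pi.zero_apply]
      have : Real.exp (-q * x) ≤ 1 := by
        rw [Real.exp_le_one_iff]
        nlinarith
      linarith
    have hΦq : b * q ≤ Φ q := by
      rw [hΦ q hq]; nlinarith
    have hbq : 0 ≤ b * q := by positivity
    have : (b * q) ^ 2 ≤ (Φ q) ^ 2 := by nlinarith
    calc b ^ 2 * q ^ 2 = (b * q) ^ 2 := by ring
      _ ≤ (Φ q) ^ 2 := this
      _ = f q := rfl
  -- linear upper bound from concavity: f Q ≤ 2 * f 1 * Q for Q > 1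
  have hup : ∀ Q > (1:ℝ), f Q ≤ 2 * f 1 * Q := by
    intro Q hQ
    have hQ0 : (0:ℝ) < Q := by linarith
    have hden : (0:ℝ) < Q - 1/2 := by linarith
    have hne : Q - 1/2 ≠ 0 := ne_of_gt hden
    have ht0 : 0 ≤ (Q - 1) / (Q - 1/2) := div_nonneg (by linarith) hden.le
    have hs0 : 0 ≤ (1/2 : ℝ) / (Q - 1/2) := div_nonneg (by norm_num) hden.le
    have hts : (Q - 1) / (Q - 1/2) + (1/2) / (Q - 1/2) = 1 := by
      rw [← add_div, div_eq_one_iff_eq hne]; ring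
    have hcomb : ((Q - 1) / (Q - 1/2)) • (1/2 : ℝ) + ((1/2) / (Q - 1/2)) • Q = 1 := by
      rw [smul_eq_mul, smul_eq_mul, div_mul_eq_mul_div, div_mul_eq_mul_div,
        ← add_div, div_eq_one_iff_eq hne]
      ring
    have h := hconc.2 (show (1/2:ℝ) ∈ Ioi 0 by norm_num) (show Q ∈ Ioi 0 from hQ0)
      ht0 hs0 hts
    rw [hcomb] at h
    rw [smul_eq_mul, smul_eq_mul] at h
    have hfhalf : 0 ≤ f (1/2) := hΦ2.2.1 (1/2) (by norm_num)
    have h1 : (1/2) / (Q - 1/2) * f Q ≤ f 1 := by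
      nlinarith [mul_nonneg ht0 hfhalf]
    rw [div_mul_eq_mul_div, div_le_iff₀ hden] at h1
    have hf1 : 0 ≤ f 1 := hΦ2.2.1 1 one_pos
    nlinarith
  -- conclude
  by_contra hbne
  have hbpos : 0 < b := lt_of_le_of_ne hb (Ne.symm hbne)
  set Q : ℝ := max 2 ((2 * f 1 + 1) / b ^ 2) with hQdef
  have hQ1 : 1 < Q := lt_of_lt_of_le one_lt_two (le_max_left _ _)
  have hQ0 : 0 < Q := by linarith
  have h1 := hlow Q hQ0
  have h2 := hup Q hQ1
  have h3 : (2 * f 1 + 1) / b ^ 2 ≤ Q := le_max_right _ _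
  have hb2 : 0 < b ^ 2 := by positivity
  have h4 : 2 * f 1 + 1 ≤ b ^ 2 * Q := by
    rw [div_le_iff₀ hb2] at h3; linarith [h3]
  nlinarith
end
end

section
/- Let κ be a Bernstein function and let a, c ≥ 0. Then the function q ↦ (a + c √(κ(q)))² on (0,∞) is a Bernstein function. -/
open MeasureTheory Real Set

noncomputable section

/-- Leibniz formula for iterated derivatives within `(0,∞)`. -/
lemma itdw_mul {f g : ℝ → ℝ} (hf : ContDiffOn ℝ (⊤ : ℕ∞) f (Ioi 0))
    (hg : ContDiffOn ℝ (⊤ : ℕ∞) g (Ioi 0)) (n : ℕ) :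
    ∀ x ∈ Ioi (0:ℝ),
      iteratedDerivWithin n (fun y => f y * g y) (Ioi 0) x
        = ∑ k ∈ Finset.range (n+1), (n.choose k : ℝ) *
            (iteratedDerivWithin k f (Ioi 0) x * iteratedDerivWithin (n-k) g (Ioi 0) x) := by
  have hu : UniqueDiffOn ℝ (Ioi (0:ℝ)) := uniqueDiffOn_Ioi 0
  have hdf : ∀ m : ℕ, DifferentiableOn ℝ (iteratedDerivWithin m f (Ioi 0)) (Ioi 0) :=
    fun m => hf.differentiableOn_iteratedDerivWithin
      (by exact_mod_cast lt_top_iff_ne_top.2 (by simp)) hu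
  have hdg : ∀ m : ℕ, DifferentiableOn ℝ (iteratedDerivWithin m g (Ioi 0)) (Ioi 0) :=
    fun m => hg.differentiableOn_iteratedDerivWithin
      (by exact_mod_cast lt_top_iff_ne_top.2 (by simp)) hu
  induction n with
  | zero => intro x hx; simp
  | succ n IH =>
    intro x hx
    rw [iteratedDerivWithin_succ]
    have hdiff : ∀ k ∈ Finset.range (n+1), DifferentiableWithinAt ℝ
        (fun y => (n.choose k : ℝ) * (iteratedDerivWithin k f (Ioi 0) y *
          iteratedDerivWithin (n-k) g (Ioi 0) y)) (Ioi 0) x :=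
      fun k _ => (((hdf k x hx).mul (hdg (n-k) x hx)).const_mul _)
    rw [derivWithin_congr (fun y hy => IH y hy) (IH x hx)]
    rw [derivWithin_fun_sum hdiff]
    have step : ∀ k ∈ Finset.range (n+1),
        derivWithin (fun y => (n.choose k : ℝ) * (iteratedDerivWithin k f (Ioi 0) y *
            iteratedDerivWithin (n-k) g (Ioi 0) y)) (Ioi 0) x
          = (n.choose k : ℝ) * (iteratedDerivWithin (k+1) f (Ioi 0) x *
              iteratedDerivWithin (n-k) g (Ioi 0) x)
            + (n.choose k : ℝ) * (iteratedDerivWithin k f (Ioi 0) x *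
              iteratedDerivWithin (n-k+1) g (Ioi 0) x) := by
      intro k _
      rw [derivWithin_const_mul (d := fun y => iteratedDerivWithin k f (Ioi 0) y *
          iteratedDerivWithin (n-k) g (Ioi 0) y) _ ((hdf k x hx).mul (hdg (n-k) x hx)),
        derivWithin_fun_mul (hdf k x hx) (hdg (n-k) x hx),
        ← iteratedDerivWithin_succ, ← iteratedDerivWithin_succ]
      ring
    rw [Finset.sum_congr rfl step, Finset.sum_add_distrib]
    have key : ∀ (F G : ℕ → ℝ),
        (∑ k ∈ Finset.range (n+1), (n.choose k : ℝ) * (F (k+1) * G (n-k)))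
          + (∑ k ∈ Finset.range (n+1), (n.choose k : ℝ) * (F k * G (n-k+1)))
        = ∑ k ∈ Finset.range (n+2), ((n+1).choose k : ℝ) * (F k * G (n+1-k)) := by
      intro F G
      rw [Finset.sum_range_succ' (fun k => ((n+1).choose k : ℝ) * (F k * G (n+1-k))) (n+1)]
      rw [Finset.sum_range_succ' (fun k => (n.choose k : ℝ) * (F k * G (n-k+1))) n]
      have h1 : ∀ k ∈ Finset.range (n+1), ((n+1).choose (k+1) : ℝ) * (F (k+1) * G (n+1-(k+1)))
          = (n.choose k : ℝ) * (F (k+1) * G (n-k)) +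
            (n.choose (k+1) : ℝ) * (F (k+1) * G (n-k)) := by
        intro k hk
        have : n+1-(k+1) = n-k := by omega
        rw [this, Nat.choose_succ_succ]
        push_cast
        ring
      rw [Finset.sum_congr rfl h1, Finset.sum_add_distrib]
      have h2 : (∑ k ∈ Finset.range n, (n.choose (k+1) : ℝ) * (F (k+1) * G (n-(k+1)+1)))
          = ∑ k ∈ Finset.range (n+1), (n.choose (k+1) : ℝ) * (F (k+1) * G (n-k)) := by
        rw [Finset.sum_range_succ]
        have h3 : ∀ k ∈ Finset.range n, (n.choose (k+1) : ℝ) * (F (k+1) * G (n-(k+1)+1))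
            = (n.choose (k+1) : ℝ) * (F (k+1) * G (n-k)) := by
          intro k hk
          simp only [Finset.mem_range] at hk
          have : n-(k+1)+1 = n-k := by omega
          rw [this]
        rw [Finset.sum_congr rfl h3]
        simp [Nat.choose_succ_self]
      simp only [Nat.choose_zero_right, Nat.cast_one, one_mul, Nat.sub_zero] at *
      rw [← h2]
      ring
    exact key (fun k => iteratedDerivWithin k f (Ioi 0) x)
      (fun k => iteratedDerivWithin k g (Ioi 0) x) ▸ rfl

/-- A Bernstein function is either everywhere positive or identically zero on `(0,∞)`. -/
lemma bernstein_pos_or_zero {κ : ℝ → ℝ} (hκ : IsBernstein κ) :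
    (∀ q > (0:ℝ), 0 < κ q) ∨ (∀ q > (0:ℝ), κ q = 0) := by
  have hu : UniqueDiffOn ℝ (Ioi (0:ℝ)) := uniqueDiffOn_Ioi 0
  have hdiff : ∀ x ∈ Ioi (0:ℝ), DifferentiableAt ℝ κ x := fun x hx =>
    (hκ.1.contDiffAt ((isOpen_Ioi).mem_nhds hx)).differentiableAt (by simp)
  have hderiv_eq : ∀ x ∈ Ioi (0:ℝ), deriv κ x = iteratedDerivWithin 1 κ (Ioi 0) x := by
    intro x hx
    rw [iteratedDerivWithin_one, derivWithin_of_isOpen isOpen_Ioi hx]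
  have hd1 : ∀ x ∈ Ioi (0:ℝ), 0 ≤ deriv κ x := by
    intro x hx
    rw [hderiv_eq x hx]
    simpa using hκ.2.2 1 le_rfl x hx
  have hEq1 : EqOn (deriv κ) (iteratedDerivWithin 1 κ (Ioi 0)) (Ioi 0) := hderiv_eq
  have hdOn : DifferentiableOn ℝ (deriv κ) (Ioi 0) :=
    (hκ.1.differentiableOn_iteratedDerivWithin
      (by exact_mod_cast lt_top_iff_ne_top.2 (by simp)) hu).congr hEq1
  have hd2 : ∀ x ∈ Ioi (0:ℝ), deriv (deriv κ) x ≤ 0 := by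
    intro x hx
    have h2 : iteratedDerivWithin 2 κ (Ioi 0) x = deriv (deriv κ) x := by
      rw [iteratedDerivWithin_succ,
        derivWithin_congr hEq1.symm (hEq1.symm hx), derivWithin_of_isOpen isOpen_Ioi hx]
    have h3 := hκ.2.2 2 (by norm_num) x hx
    norm_num at h3
    rw [h2] at h3
    linarith
  have hmono : MonotoneOn κ (Ioi 0) :=
    monotoneOn_of_deriv_nonneg (convex_Ioi 0) hκ.1.continuousOn
      (by rw [interior_Ioi]; exact fun x hx => (hdiff x hx).differentiableWithinAt)
      (by rw [interior_Ioi]; exact hd1)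
  by_cases h : ∀ q > (0:ℝ), 0 < κ q
  · exact Or.inl h
  · right
    push_neg at h
    obtain ⟨q0, hq0, hle⟩ := h
    have hκ0 : κ q0 = 0 := le_antisymm hle (hκ.2.1 q0 hq0)
    have hzero_le : ∀ q, 0 < q → q ≤ q0 → κ q = 0 := by
      intro q hq hqq0
      exact le_antisymm (hκ0 ▸ hmono hq hq0 hqq0) (hκ.2.1 q hq)
    have hd0 : deriv κ (q0/2) = 0 := by
      have hev : κ =ᶠ[nhds (q0/2)] fun _ => 0 := by
        refine Filter.eventuallyEq_of_mem
          (Ioo_mem_nhds (show (0:ℝ) < q0/2 by linarith) (show q0/2 < q0 by linarith)) ?_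
        intro y hy
        exact hzero_le y hy.1 hy.2.le
      rw [hev.deriv_eq]
      simp
    have hanti : AntitoneOn (deriv κ) (Ioi 0) :=
      antitoneOn_of_deriv_nonpos (convex_Ioi 0) hdOn.continuousOn
        (by rw [interior_Ioi]; exact hdOn) (by rw [interior_Ioi]; exact hd2)
    have hderiv0 : ∀ x ∈ Ioi q0, deriv κ x ≤ 0 := by
      intro x hx
      have := hanti (show q0/2 ∈ Ioi (0:ℝ) by simp; linarith) (show x ∈ Ioi (0:ℝ) by
        simp at hx ⊢; linarith) (by simp at hx; linarith)
      rw [hd0] at this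
      exact this
    have hantiκ : AntitoneOn κ (Ici q0) := by
      refine antitoneOn_of_deriv_nonpos (convex_Ici q0)
        (hκ.1.continuousOn.mono (fun y hy => lt_of_lt_of_le hq0 hy)) ?_ ?_
      · rw [interior_Ici]
        exact fun x hx => ((hdiff x (lt_trans hq0 hx)).differentiableWithinAt)
      · rw [interior_Ici]
        exact hderiv0
    intro q hq
    rcases le_or_gt q q0 with hle' | hlt
    · exact hzero_le q hq hle'
    · exact le_antisymm (hκ0 ▸ hantiκ (mem_Ici.2 le_rfl) (mem_Ici.2 hlt.le) hlt.le) (hκ.2.1 q hq)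

/-- The square root of a positive Bernstein function is Bernstein. -/
lemma sqrt_isBernstein {κ : ℝ → ℝ} (hκ : IsBernstein κ) (hpos : ∀ q > (0:ℝ), 0 < κ q) :
    IsBernstein (fun q => Real.sqrt (κ q)) := by
  have hu : UniqueDiffOn ℝ (Ioi (0:ℝ)) := uniqueDiffOn_Ioi 0
  set g : ℝ → ℝ := fun q => Real.sqrt (κ q) with hgdef
  have hg : ContDiffOn ℝ (⊤ : ℕ∞) g (Ioi 0) := hκ.1.sqrt (fun x hx => (hpos x hx).ne')
  refine ⟨hg, fun q hq => Real.sqrt_nonneg _, ?_⟩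
  have hEq : EqOn (fun y => g y * g y) κ (Ioi 0) := fun y hy =>
    Real.mul_self_sqrt (hpos y hy).le
  have hkn : ∀ (n : ℕ) (x : ℝ), x ∈ Ioi (0:ℝ) → iteratedDerivWithin n κ (Ioi 0) x
      = ∑ k ∈ Finset.range (n+1), (n.choose k : ℝ) *
          (iteratedDerivWithin k g (Ioi 0) x * iteratedDerivWithin (n-k) g (Ioi 0) x) :=
    fun n x hx => ((iteratedDerivWithin_congr hEq hx).symm).trans (itdw_mul hg hg n x hx)
  intro n
  induction n using Nat.strong_induction_on with
  | _ n IH =>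
    intro hn x hx
    have hgx : 0 < g x := Real.sqrt_pos.2 (hpos x hx)
    set G : ℕ → ℝ := fun k => iteratedDerivWithin k g (Ioi 0) x with hGdef
    have hsum : iteratedDerivWithin n κ (Ioi 0) x
        = g x * G n + (∑ k ∈ Finset.Ico 1 n, (n.choose k : ℝ) * (G k * G (n-k)))
          + G n * g x := by
      rw [hkn n x hx, Finset.sum_range_succ, Finset.range_eq_Ico,
        Finset.sum_eq_sum_Ico_succ_bot (by omega : 0 < n)]
      have h0 : iteratedDerivWithin 0 g (Ioi 0) x = g x := by simp
      simp only [Nat.choose_zero_right, Nat.cast_one, one_mul, Nat.sub_zero, Nat.choose_self,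
        Nat.sub_self, h0]
      try ring
    have hM : 0 ≤ (-1:ℝ)^n * (∑ k ∈ Finset.Ico 1 n, (n.choose k : ℝ) * (G k * G (n-k))) := by
      rw [Finset.mul_sum]
      refine Finset.sum_nonneg ?_
      intro k hk
      simp only [Finset.mem_Ico] at hk
      have h1 := IH k (by omega) (by omega) x hx
      have h2 := IH (n-k) (by omega) (by omega) x hx
      have hsign : (-1:ℝ)^n = (-1:ℝ)^(k-1) * (-1:ℝ)^(n-k-1) := by
        have : (-1:ℝ)^n = (-1:ℝ)^((k-1)+(n-k-1)) * (-1:ℝ)^2 := by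
          rw [← pow_add]
          congr 1
          omega
        rw [this, ← pow_add]
        simp [pow_add]
      have : (-1:ℝ)^n * ((n.choose k : ℝ) * (G k * G (n-k)))
          = (n.choose k : ℝ) * (((-1:ℝ)^(k-1) * G k) * ((-1:ℝ)^(n-k-1) * G (n-k))) := by
        rw [hsign]; ring
      rw [this]
      exact mul_nonneg (by positivity) (mul_nonneg h1 h2)
    have hκsign := hκ.2.2 n hn x hx
    have hpow : (-1:ℝ)^n = -(-1:ℝ)^(n-1) := by
      rw [show n = (n-1)+1 by omega, pow_succ]
      simp
    have h2g : (2 * g x) * ((-1:ℝ)^(n-1) * G n)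
        = (-1:ℝ)^(n-1) * iteratedDerivWithin n κ (Ioi 0) x
          + (-1:ℝ)^n * (∑ k ∈ Finset.Ico 1 n, (n.choose k : ℝ) * (G k * G (n-k))) := by
      rw [hsum, hpow]
      ring
    have hprod : (2 * g x) * 0 ≤ (2 * g x) * ((-1:ℝ)^(n-1) * G n) := by
      rw [mul_zero, h2g]
      exact add_nonneg hκsign hM
    exact le_of_mul_le_mul_left (by simpa using hprod) (by positivity)

lemma itdw_zero_fun (n : ℕ) : ∀ x ∈ Ioi (0:ℝ),
    iteratedDerivWithin n (fun _ : ℝ => (0:ℝ)) (Ioi (0:ℝ)) x = 0 := by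
  have hu : UniqueDiffOn ℝ (Ioi (0:ℝ)) := uniqueDiffOn_Ioi 0
  induction n with
  | zero => intro x hx; simp
  | succ n IH =>
    intro x hx
    rw [iteratedDerivWithin_succ']
    have hEq : EqOn (derivWithin (fun _ : ℝ => (0:ℝ)) (Ioi (0:ℝ)))
        (fun _ : ℝ => (0:ℝ)) (Ioi (0:ℝ)) := by
      intro y hy
      exact congrFun (derivWithin_const _ 0) y
    rw [iteratedDerivWithin_congr hEq hx]
    exact IH x hx

lemma itdw_const (c : ℝ) {n : ℕ} (hn : 1 ≤ n) : ∀ x ∈ Ioi (0:ℝ),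
    iteratedDerivWithin n (fun _ => c) (Ioi 0) x = 0 := by
  have hu : UniqueDiffOn ℝ (Ioi (0:ℝ)) := uniqueDiffOn_Ioi 0
  intro x hx
  obtain ⟨m, rfl⟩ : ∃ m, n = m + 1 := ⟨n - 1, by omega⟩
  rw [iteratedDerivWithin_succ']
  have hEq : EqOn (derivWithin (fun _ : ℝ => c) (Ioi (0:ℝ)))
      (fun _ : ℝ => (0:ℝ)) (Ioi (0:ℝ)) := by
    intro y hy
    exact congrFun (derivWithin_const _ c) y
  rw [iteratedDerivWithin_congr hEq hx]
  exact itdw_zero_fun m x hx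

/-- If `κ` is a Bernstein function and `a, c ≥ 0`, then
`q ↦ (a + c √(κ(q)))²` is a Bernstein function. -/
theorem sq_of_affine_sqrt_isBernstein
    (κ : ℝ → ℝ) (hκ : IsBernstein κ)
    (a c : ℝ) (ha : 0 ≤ a) (hc : 0 ≤ c) :
    IsBernstein (fun q => (a + c * Real.sqrt (κ q)) ^ 2) := by
  have hu : UniqueDiffOn ℝ (Ioi (0:ℝ)) := uniqueDiffOn_Ioi 0
  rcases bernstein_pos_or_zero hκ with hpos | hzero
  · -- κ positive on (0,∞)
    have hgB : IsBernstein (fun q => Real.sqrt (κ q)) := sqrt_isBernstein hκ hpos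
    set g : ℝ → ℝ := fun q => Real.sqrt (κ q) with hgdef
    have hF : ContDiffOn ℝ (⊤ : ℕ∞) (fun q => (a + c * Real.sqrt (κ q)) ^ 2) (Ioi 0) :=
      (contDiffOn_const.add (contDiffOn_const.mul hgB.1)).pow 2
    refine ⟨hF, fun q hq => sq_nonneg _, ?_⟩
    intro n hn x hx
    have hx' : x ∈ Ioi (0:ℝ) := hx
    have hEqF : EqOn (fun q => (a + c * Real.sqrt (κ q)) ^ 2)
        (fun q => a^2 + (2*a*c * g q + c^2 * κ q)) (Ioi 0) := by
      intro q hq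
      have h0 : Real.sqrt (κ q) * Real.sqrt (κ q) = κ q :=
        Real.mul_self_sqrt (hpos q hq).le
      show (a + c * Real.sqrt (κ q)) ^ 2 = a^2 + (2*a*c * Real.sqrt (κ q) + c^2 * κ q)
      rw [show (a + c * Real.sqrt (κ q)) ^ 2
          = a^2 + (2*a*c * Real.sqrt (κ q) + c^2 * (Real.sqrt (κ q) * Real.sqrt (κ q)))
        from by ring, h0]
    rw [iteratedDerivWithin_congr hEqF hx']
    rw [iteratedDerivWithin_const_add (f := fun q => 2*a*c * g q + c^2 * κ q)
      (show 0 < n by omega) (a^2)]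
    have hA : ContDiffOn ℝ (n : ℕ∞) (fun q => 2*a*c * g q) (Ioi 0) :=
      (contDiffOn_const.mul hgB.1).of_le (by exact_mod_cast le_top)
    have hB : ContDiffOn ℝ (n : ℕ∞) (fun q => c^2 * κ q) (Ioi 0) :=
      (contDiffOn_const.mul hκ.1).of_le (by exact_mod_cast le_top)
    have hadd : iteratedDerivWithin n (fun q => 2*a*c * g q + c^2 * κ q) (Ioi 0) x
        = 2*a*c * iteratedDerivWithin n g (Ioi 0) x
          + c^2 * iteratedDerivWithin n κ (Ioi 0) x := by
      rw [show (fun q => 2*a*c * g q + c^2 * κ q)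
          = (fun q => 2*a*c * g q) + (fun q => c^2 * κ q) from rfl,
        iteratedDerivWithin_add hx' hu (hA x hx') (hB x hx'),
        iteratedDerivWithin_const_mul hx' hu _ ((hgB.1.of_le (by exact_mod_cast le_top)) x hx'),
        iteratedDerivWithin_const_mul hx' hu _ ((hκ.1.of_le (by exact_mod_cast le_top)) x hx')]
    rw [hadd]
    have s1 := hgB.2.2 n hn x hx
    have s2 := hκ.2.2 n hn x hx
    have expand : (-1:ℝ)^(n-1) * (2*a*c * iteratedDerivWithin n g (Ioi 0) x
        + c^2 * iteratedDerivWithin n κ (Ioi 0) x)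
        = 2*a*c * ((-1:ℝ)^(n-1) * iteratedDerivWithin n g (Ioi 0) x)
          + c^2 * ((-1:ℝ)^(n-1) * iteratedDerivWithin n κ (Ioi 0) x) := by ring
    rw [expand]
    have h2ac : 0 ≤ 2*a*c := by positivity
    exact add_nonneg (mul_nonneg h2ac s1) (mul_nonneg (by positivity) s2)
  · -- κ ≡ 0 on (0,∞)
    have hEqF : EqOn (fun q => (a + c * Real.sqrt (κ q)) ^ 2) (fun _ => a^2) (Ioi 0) := by
      intro q hq
      simp [hzero q hq]
    refine ⟨contDiffOn_const.congr hEqF, fun q hq => sq_nonneg _, ?_⟩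
    intro n hn x hx
    have hx' : x ∈ Ioi (0:ℝ) := hx
    rw [iteratedDerivWithin_congr hEqF hx', itdw_const (a^2) hn x hx']
    simp
end
end

section
/- The function q ↦ (log(1+q))² on (0,∞) is not a Bernstein function. Consequently, the Bernstein function q ↦ log(1+q) (the Laplace exponent of the gamma subordinator) is not internal. -/
open MeasureTheory Real Set

noncomputable section

lemma hderiv1 (q : ℝ) (hq : 0 < 1 + q) :
    HasDerivAt (fun q : ℝ => (Real.log (1 + q)) ^ 2)
      (2 * Real.log (1 + q) * (1 / (1 + q))) q := by
  have h0 : HasDerivAt (fun q : ℝ => 1 + q) 1 q := (hasDerivAt_id q).const_add 1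
  have h1 : HasDerivAt (fun q : ℝ => Real.log (1 + q)) (1 / (1 + q)) q := by
    simpa [one_div, Function.comp_def] using (Real.hasDerivAt_log hq.ne').comp q h0
  have := h1.pow 2
  simpa [mul_comm, mul_assoc, mul_left_comm, Pi.pow_def] using this

lemma hderiv2 :
    HasDerivAt (fun q : ℝ => 2 * Real.log (1 + q) * (1 / (1 + q)))
      ((1 - Real.log 2) / 2) 1 := by
  have h0 : HasDerivAt (fun q : ℝ => 1 + q) 1 (1:ℝ) := (hasDerivAt_id 1).const_add 1
  have hq : (0:ℝ) < 1 + 1 := by norm_num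
  have h1 : HasDerivAt (fun q : ℝ => Real.log (1 + q)) (1 / (1 + 1)) (1:ℝ) := by
    simpa [one_div, Function.comp_def] using (Real.hasDerivAt_log hq.ne').comp 1 h0
  have h2 : HasDerivAt (fun q : ℝ => 2 * Real.log (1 + q)) (2 * (1 / (1+1))) (1:ℝ) :=
    h1.const_mul 2
  have h3 : HasDerivAt (fun q : ℝ => (1 + q)⁻¹) (-1 / (1+1)^2) (1:ℝ) := by
    have := (h0.inv hq.ne')
    simpa [Pi.inv_def] using this
  have := h2.mul h3
  have e : (2 * (1 / (1+1)) * (1+1)⁻¹ + 2 * Real.log (1+1) * (-1 / (1+1)^2))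
      = (1 - Real.log 2) / 2 := by norm_num; ring
  rw [e] at this
  simpa [one_div, Pi.mul_def] using this

lemma not_bernstein_log_sq :
    ¬ IsBernstein (fun q : ℝ => (Real.log (1 + q)) ^ 2) := by
  intro hB
  have h := hB.2.2 2 (by norm_num) 1 one_pos
  have heq : iteratedDerivWithin 2 (fun q : ℝ => (Real.log (1 + q)) ^ 2) (Ioi 0) 1
      = (1 - Real.log 2) / 2 := by
    rw [iteratedDerivWithin_eq_iteratedFDerivWithin,
      iteratedFDerivWithin_of_isOpen 2 isOpen_Ioi (by norm_num : (1:ℝ) ∈ Ioi (0:ℝ)),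
      ← iteratedDeriv_eq_iteratedFDeriv]
    rw [iteratedDeriv_succ, iteratedDeriv_one]
    have hev : deriv (fun q : ℝ => (Real.log (1 + q)) ^ 2)
        =ᶠ[nhds (1:ℝ)] fun q => 2 * Real.log (1 + q) * (1 / (1 + q)) := by
      filter_upwards [Ioi_mem_nhds (by norm_num : (-1:ℝ) < 1)] with q hq
      exact (hderiv1 q (by linarith [mem_Ioi.mp hq])).deriv
    rw [hev.deriv_eq]
    exact hderiv2.deriv
  rw [heq] at h
  have hlog2 : Real.log 2 < 1 := by
    have := Real.log_two_lt_d9; linarith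
  norm_num at h
  linarith

/-- `q ↦ (log(1+q))²` is not a Bernstein function; consequently the
Bernstein function `q ↦ log(1+q)` of the gamma subordinator is not internal. -/
theorem log_one_add_not_internal :
    ¬ IsBernstein (fun q : ℝ => (Real.log (1 + q)) ^ 2) ∧
    ¬ (∀ Ψ : ℝ → ℝ, IsBranchingMechanism Ψ →
        IsBernstein (Ψ ∘ fun q : ℝ => Real.log (1 + q))) := by
  refine ⟨not_bernstein_log_sq, fun h => not_bernstein_log_sq ?_⟩
  have mech : IsBranchingMechanism (fun q : ℝ => q ^ 2) := by
    refine ⟨0, 1, 0, le_refl 0, zero_le_one, by simp, by simp, fun q hq => by simp⟩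
  exact h (fun q : ℝ => q ^ 2) mech
end
end

section
/- Let Ψ be a (sub)critical branching mechanism which is not identically zero. Then Ψ is a strictly increasing bijection of (0,∞) onto (0,∞), and its inverse function Ψ⁻¹ : (0,∞) → (0,∞) is a Bernstein function. -/
open MeasureTheory Real Set

noncomputable section

namespace BernsteinAux

lemma exp_neg_sub_one_add_nonneg (t : ℝ) : 0 ≤ Real.exp (-t) - 1 + t := by
  have h := Real.add_one_le_exp (-t); linarith

lemma exp_neg_sub_one_add_le_sq {t : ℝ} (ht : 0 ≤ t) :
    Real.exp (-t) - 1 + t ≤ t ^ 2 := by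
  have h1 : (0:ℝ) < 1 + t := by linarith
  have h2 : 1 + t ≤ Real.exp t := by have := Real.add_one_le_exp t; linarith
  have h5 : Real.exp (-t) * (1 + t) ≤ 1 := by
    calc Real.exp (-t) * (1 + t) ≤ Real.exp (-t) * Real.exp t := by
          exact mul_le_mul_of_nonneg_left h2 (Real.exp_pos _).le
      _ = 1 := by rw [← Real.exp_add]; simp
  have hB : 1 - t ≤ Real.exp (-t) := by have := Real.add_one_le_exp (-t); linarith
  nlinarith [Real.exp_pos (-t), sq_nonneg t]

lemma pow_mul_exp_neg_le (m : ℕ) {c t : ℝ} (hc : 0 < c) (ht : 0 ≤ t) :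
    t ^ m * Real.exp (-(c * t)) ≤ (Nat.factorial m : ℝ) / c ^ m := by
  have hct : 0 ≤ c * t := mul_nonneg hc.le ht
  have h1 : (c * t) ^ m / (Nat.factorial m : ℝ) ≤ Real.exp (c * t) := by
    calc (c * t) ^ m / (Nat.factorial m : ℝ)
        ≤ ∑ i ∈ Finset.range (m + 1), (c * t) ^ i / (Nat.factorial i : ℝ) := by
          refine Finset.single_le_sum (f := fun i => (c * t) ^ i / (Nat.factorial i : ℝ)) ?_ ?_
          · intro i _
            positivity
          · exact Finset.self_mem_range_succ m
      _ ≤ Real.exp (c * t) := Real.sum_le_exp_of_nonneg hct _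
  have hfac : (0:ℝ) < (Nat.factorial m : ℝ) := by positivity
  rw [div_le_iff₀ hfac] at h1
  have h2 : t ^ m * Real.exp (-(c * t)) * c ^ m ≤ (Nat.factorial m : ℝ) := by
    have he : t ^ m * c ^ m = (c * t) ^ m := by rw [← mul_pow]; ring_nf
    calc t ^ m * Real.exp (-(c * t)) * c ^ m
        = (c * t) ^ m * Real.exp (-(c * t)) := by rw [← he]; ring
      _ ≤ Real.exp (c * t) * (Nat.factorial m : ℝ) * Real.exp (-(c * t)) := by
          exact mul_le_mul_of_nonneg_right h1 (Real.exp_pos _).le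
      _ = (Nat.factorial m : ℝ) * (Real.exp (c * t) * Real.exp (-(c * t))) := by ring
      _ = (Nat.factorial m : ℝ) := by rw [← Real.exp_add]; simp
  rw [le_div_iff₀ (pow_pos hc m)]
  exact h2

/-- The integrand family: `g 0 q x = e^{-qx} - 1 + qx` and `∂_q g n = g (n+1)`. -/
def g : ℕ → ℝ → ℝ → ℝ
  | 0 => fun q x => Real.exp (-q * x) - 1 + q * x
  | 1 => fun q x => x - x * Real.exp (-q * x)
  | (n+2) => fun q x => (-1)^n * (x^(n+2) * Real.exp (-q * x))

lemma g_cont (n : ℕ) (q : ℝ) : Continuous (fun x => g n q x) := by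
  match n with
  | 0 => simp only [g]; fun_prop
  | 1 => simp only [g]; fun_prop
  | (n+2) => simp only [g]; fun_prop

lemma hasDerivAt_g (n : ℕ) (q x : ℝ) : HasDerivAt (fun q => g n q x) (g (n+1) q x) q := by
  have h : HasDerivAt (fun q : ℝ => -q * x) (-x) q := by
    simpa using ((hasDerivAt_id q).neg.mul_const x)
  have he := h.exp
  match n with
  | 0 =>
    have h3 : HasDerivAt (fun q : ℝ => q * x) x q := by simpa using (hasDerivAt_id q).mul_const x
    have := (he.sub_const 1).add h3
    refine this.congr_deriv ?_
    simp only [g]; ring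
  | 1 =>
    have := (hasDerivAt_const q x).sub (he.const_mul x)
    refine this.congr_deriv ?_
    simp only [g]; ring
  | (n+2) =>
    have := (he.const_mul (x^(n+2))).const_mul ((-1:ℝ)^n)
    refine this.congr_deriv ?_
    simp only [g, pow_succ]; ring

lemma g0_nonneg (q x : ℝ) : 0 ≤ g 0 q x := by
  simp only [g, neg_mul]
  exact exp_neg_sub_one_add_nonneg (q * x)

lemma g1_nonneg {q : ℝ} (hq : 0 ≤ q) (x : ℝ) : 0 ≤ g 1 q x := by
  have h : 0 ≤ x * (1 - Real.exp (-q * x)) := by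
    rcases le_or_gt 0 x with hx | hx
    · refine mul_nonneg hx ?_
      have : Real.exp (-q * x) ≤ 1 := by
        rw [Real.exp_le_one_iff]
        nlinarith
      linarith
    · have h1 : 1 ≤ Real.exp (-q * x) := by
        rw [Real.one_le_exp_iff]
        nlinarith
      nlinarith [mul_nonneg (neg_nonneg.2 hx.le) (sub_nonneg.2 h1)]
  simp only [g]
  nlinarith [h]

lemma g2_nonneg (q x : ℝ) : 0 ≤ g 2 q x := by
  show 0 ≤ (-1:ℝ)^0 * (x^2 * Real.exp (-q * x))
  positivity

lemma g0_le {q x : ℝ} (hq : 0 < q) (hx : 0 < x) :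
    g 0 q x ≤ (q + q^2) * min x (x^2) := by
  have h0 : Real.exp (-q*x) - 1 + q*x = Real.exp (-(q*x)) - 1 + q*x := by rw [neg_mul]
  have hqx : 0 ≤ q * x := by positivity
  have h1 : g 0 q x ≤ q * x := by
    simp only [g, h0]
    have : Real.exp (-(q*x)) ≤ 1 := by rw [Real.exp_le_one_iff]; linarith
    linarith
  have h2 : g 0 q x ≤ (q*x)^2 := by
    simp only [g, h0]
    exact exp_neg_sub_one_add_le_sq hqx
  rcases le_total x 1 with hx1 | hx1
  · have hmin : min x (x^2) = x^2 := min_eq_right (by nlinarith)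
    rw [hmin]; nlinarith
  · have hmin : min x (x^2) = x := min_eq_left (by nlinarith)
    rw [hmin]; nlinarith

lemma g1_le {q x : ℝ} (hq : 0 < q) (hx : 0 < x) :
    g 1 q x ≤ (1 + q) * min x (x^2) := by
  have hq1 : Real.exp (-q*x) ≤ 1 := by rw [Real.exp_le_one_iff]; nlinarith
  have hq2 : 1 - q*x ≤ Real.exp (-q*x) := by
    have := Real.add_one_le_exp (-(q*x)); rw [neg_mul]; linarith
  have h1 : g 1 q x ≤ x := by
    simp only [g]; nlinarith [mul_nonneg hx.le (Real.exp_pos (-q*x)).le]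
  have h2 : g 1 q x ≤ q * x^2 := by
    simp only [g]; nlinarith [mul_le_mul_of_nonneg_left hq2 hx.le]
  rcases le_total x 1 with hx1 | hx1
  · have hmin : min x (x^2) = x^2 := min_eq_right (by nlinarith)
    rw [hmin]; nlinarith
  · have hmin : min x (x^2) = x := min_eq_left (by nlinarith)
    rw [hmin]; nlinarith

lemma g_bound (n : ℕ) {c d : ℝ} (hc : 0 < c) (hcd : c ≤ d) :
    ∃ K : ℝ, 0 ≤ K ∧ ∀ q ∈ Icc c d, ∀ x : ℝ, 0 < x → |g n q x| ≤ K * min x (x^2) := by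
  have hd : 0 < d := hc.trans_le hcd
  match n with
  | 0 =>
    refine ⟨d + d^2, by positivity, fun q hq x hx => ?_⟩
    have hq0 : 0 < q := hc.trans_le hq.1
    rw [abs_of_nonneg (g0_nonneg q x)]
    have h := g0_le hq0 hx
    have hmin : 0 ≤ min x (x^2) := le_min hx.le (by positivity)
    nlinarith [mul_le_mul_of_nonneg_right (show q + q^2 ≤ d + d^2 by nlinarith [hq.2]) hmin]
  | 1 =>
    refine ⟨1 + d, by positivity, fun q hq x hx => ?_⟩
    have hq0 : 0 < q := hc.trans_le hq.1
    rw [abs_of_nonneg (g1_nonneg hq0.le x)]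
    have h := g1_le hq0 hx
    have hmin : 0 ≤ min x (x^2) := le_min hx.le (by positivity)
    nlinarith [mul_le_mul_of_nonneg_right (show 1 + q ≤ 1 + d by nlinarith [hq.2]) hmin]
  | (m+2) =>
    refine ⟨1 + (Nat.factorial (m+1) : ℝ) / c^(m+1), by positivity, fun q hq x hx => ?_⟩
    have hq0 : 0 < q := hc.trans_le hq.1
    have habs : |g (m+2) q x| = x^(m+2) * Real.exp (-q*x) := by
      simp only [g, abs_mul, abs_pow, abs_neg, abs_one, one_pow, one_mul]
      rw [abs_of_pos hx, abs_of_pos (Real.exp_pos _)]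
    rw [habs]
    have hexp : Real.exp (-q*x) ≤ Real.exp (-(c*x)) := by
      apply Real.exp_le_exp.2; nlinarith [hq.1]
    have hmin : 0 ≤ min x (x^2) := le_min hx.le (by positivity)
    have hKc : (0:ℝ) ≤ (Nat.factorial (m+1) : ℝ) / c^(m+1) := by positivity
    rcases le_total x 1 with hx1 | hx1
    · have hm : min x (x^2) = x^2 := min_eq_right (by nlinarith)
      rw [hm]
      have h1 : x^(m+2) ≤ x^2 := pow_le_pow_of_le_one hx.le hx1 (by omega)
      have h2 : Real.exp (-q*x) ≤ 1 := by rw [Real.exp_le_one_iff]; nlinarith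
      have hx2 : (0:ℝ) ≤ x^2 := by positivity
      nlinarith [pow_nonneg hx.le (m+2), Real.exp_pos (-q*x)]
    · have hm : min x (x^2) = x := min_eq_left (by nlinarith)
      rw [hm]
      have key : x^(m+1) * Real.exp (-(c*x)) ≤ (Nat.factorial (m+1) : ℝ) / c^(m+1) :=
        pow_mul_exp_neg_le (m+1) hc hx.le
      have : x^(m+2) * Real.exp (-q*x) ≤ x * (x^(m+1) * Real.exp (-(c*x))) := by
        have : x^(m+2) = x * x^(m+1) := by ring
        rw [this]
        have := mul_le_mul_of_nonneg_left hexp (by positivity : (0:ℝ) ≤ x^(m+1))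
        nlinarith [pow_nonneg hx.le (m+1), Real.exp_pos (-q*x)]
      calc x^(m+2) * Real.exp (-q*x) ≤ x * (x^(m+1) * Real.exp (-(c*x))) := this
        _ ≤ x * ((Nat.factorial (m+1) : ℝ) / c^(m+1)) := by
            exact mul_le_mul_of_nonneg_left key hx.le
        _ ≤ (1 + (Nat.factorial (m+1) : ℝ) / c^(m+1)) * x := by nlinarith
end BernsteinAux

section MeasurePart

open Filter Topology

variable {Pi : Measure ℝ} (hPi0 : Pi (Iic 0) = 0)
  (hPiM : (∫⁻ x, ENNReal.ofReal (min x (x ^ 2)) ∂Pi) < ⊤)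

lemma ae_pos (hPi0 : Pi (Iic 0) = 0) : ∀ᵐ x ∂Pi, 0 < x := by
  have h : {x : ℝ | ¬ 0 < x} = Iic 0 := by ext x; simp [not_lt]
  rw [ae_iff, h]; exact hPi0

include hPi0 hPiM in
lemma integrable_min_fn : Integrable (fun x => min x (x ^ 2)) Pi := by
  refine ⟨(continuous_id.min (continuous_pow 2)).aestronglyMeasurable, ?_⟩
  rw [hasFiniteIntegral_iff_ofReal]
  · exact hPiM
  · exact (ae_pos hPi0).mono fun x hx => (lt_min hx (by positivity)).le

include hPi0 hPiM in
lemma integrable_of_le_min {f : ℝ → ℝ} (hf : AEStronglyMeasurable f Pi) {K : ℝ}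
    (h : ∀ x : ℝ, 0 < x → |f x| ≤ K * min x (x ^ 2)) : Integrable f Pi := by
  refine ((integrable_min_fn hPi0 hPiM).const_mul K).mono' hf ?_
  exact (ae_pos hPi0).mono fun x hx => by simpa [Real.norm_eq_abs] using h x hx

include hPi0 hPiM in
lemma integrable_g (n : ℕ) {q : ℝ} (hq : 0 < q) :
    Integrable (fun x => BernsteinAux.g n q x) Pi := by
  obtain ⟨K, _, hK⟩ := BernsteinAux.g_bound n hq (le_refl q)
  exact integrable_of_le_min hPi0 hPiM (BernsteinAux.g_cont n q).aestronglyMeasurable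
    (fun x hx => by simpa [pow_two] using hK q ⟨le_rfl, le_rfl⟩ x hx)

include hPi0 hPiM in
lemma hasDerivAt_integral_g (n : ℕ) {q : ℝ} (hq : 0 < q) :
    HasDerivAt (fun q => ∫ x, BernsteinAux.g n q x ∂Pi)
      (∫ x, BernsteinAux.g (n+1) q x ∂Pi) q := by
  obtain ⟨K, hK0, hK⟩ := BernsteinAux.g_bound (n+1) (half_pos hq) (by linarith : q/2 ≤ 2*q)
  have hball : ∀ r ∈ Metric.ball q (q/2), r ∈ Icc (q/2) (2*q) := by
    intro r hr
    rw [Metric.mem_ball, Real.dist_eq, abs_lt] at hr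
    constructor <;> linarith [hr.1, hr.2]
  refine (hasDerivAt_integral_of_dominated_loc_of_deriv_le (Metric.ball_mem_nhds q (half_pos hq))
    (Filter.Eventually.of_forall fun r => (BernsteinAux.g_cont n r).aestronglyMeasurable)
    (integrable_g hPi0 hPiM n hq)
    ((BernsteinAux.g_cont (n+1) q).aestronglyMeasurable)
    ?_ ((integrable_min_fn hPi0 hPiM).const_mul K)
    (Filter.Eventually.of_forall fun x r _ => BernsteinAux.hasDerivAt_g n r x)).2
  exact (ae_pos hPi0).mono fun x hx r hr => by
    simpa [Real.norm_eq_abs] using hK r (hball r hr) x hx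

include hPiM in
lemma Pi_Ioi_lt_top {ε : ℝ} (hε : 0 < ε) : Pi (Ioi ε) < ⊤ := by
  have hc : 0 < ENNReal.ofReal (min ε (ε^2)) := ENNReal.ofReal_pos.2 (lt_min hε (by positivity))
  have hle : ENNReal.ofReal (min ε (ε^2)) * Pi (Ioi ε) ≤ ∫⁻ x, ENNReal.ofReal (min x (x ^ 2)) ∂Pi := by
    calc ENNReal.ofReal (min ε (ε^2)) * Pi (Ioi ε)
        = ∫⁻ _ in Ioi ε, ENNReal.ofReal (min ε (ε^2)) ∂Pi := (setLIntegral_const _ _).symm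
      _ ≤ ∫⁻ x in Ioi ε, ENNReal.ofReal (min x (x ^ 2)) ∂Pi := by
          refine setLIntegral_mono ((ENNReal.measurable_ofReal.comp
            (measurable_id.min (measurable_id.pow_const 2)))) ?_
          intro x hx
          refine ENNReal.ofReal_le_ofReal (le_min ?_ ?_)
          · exact (min_le_left _ _).trans (le_of_lt hx)
          · refine (min_le_right _ _).trans ?_
            have : ε ≤ x := (le_of_lt hx)
            nlinarith [hε]
      _ ≤ ∫⁻ x, ENNReal.ofReal (min x (x ^ 2)) ∂Pi := setLIntegral_le_lintegral _ _
  by_contra htop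
  rw [not_lt, top_le_iff] at htop
  rw [htop, ENNReal.mul_top hc.ne'] at hle
  exact absurd (top_le_iff.1 hle) (by simpa using hPiM.ne)

lemma exists_eps (h : Pi (Ioi 0) ≠ 0) : ∃ ε : ℝ, 0 < ε ∧ 0 < Pi (Ioi ε) := by
  by_contra hcon
  push_neg at hcon
  apply h
  have hsub : Ioi (0:ℝ) ⊆ ⋃ n : ℕ, Ioi (1/(n+1) : ℝ) := by
    intro x hx
    obtain ⟨n, hn⟩ := exists_nat_one_div_lt (mem_Ioi.1 hx)
    exact mem_iUnion.2 ⟨n, hn⟩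
  refine measure_mono_null hsub (measure_iUnion_null fun n => ?_)
  have h1 : (0:ℝ) < 1/(n+1) := by positivity
  have := hcon (1/(n+1) : ℝ) h1
  simpa using this

lemma integral_ge_indicator {f : ℝ → ℝ} (hf : Integrable f Pi) {s : Set ℝ}
    (hs : MeasurableSet s) (hfin : Pi s < ⊤) {e : ℝ} (he : 0 ≤ e)
    (h1 : ∀ x ∈ s, e ≤ f x) (h0 : ∀ x : ℝ, 0 ≤ f x) :
    e * (Pi s).toReal ≤ ∫ x, f x ∂Pi := by
  have hind : Integrable (s.indicator (fun _ => e)) Pi :=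
    (integrable_indicator_iff hs).2 (integrableOn_const hfin.ne)
  have hle : ∀ x, s.indicator (fun _ => e) x ≤ f x := by
    intro x
    by_cases hx : x ∈ s
    · simpa [hx] using h1 x hx
    · simpa [hx] using h0 x
  calc e * (Pi s).toReal = ∫ x, s.indicator (fun _ => e) x ∂Pi := by
        rw [integral_indicator_const e hs, smul_eq_mul, mul_comm, measureReal_def]
    _ ≤ ∫ x, f x ∂Pi := integral_mono hind hf hle

end MeasurePart

namespace BernsteinAux

open Filter Topology

/-- The `n`-th derivative of the branching mechanism. -/
def Dfun (a b : ℝ) (Pi : Measure ℝ) : ℕ → ℝ → ℝ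
  | 0 => fun q => a * q + b * q ^ 2 + ∫ x, g 0 q x ∂Pi
  | 1 => fun q => a + 2 * b * q + ∫ x, g 1 q x ∂Pi
  | 2 => fun q => 2 * b + ∫ x, g 2 q x ∂Pi
  | (n+3) => fun q => ∫ x, g (n+3) q x ∂Pi

variable {Pi : Measure ℝ} (hPi0 : Pi (Iic 0) = 0)
  (hPiM : (∫⁻ x, ENNReal.ofReal (min x (x ^ 2)) ∂Pi) < ⊤)

include hPi0 hPiM in
lemma hasDerivAt_Dfun (a b : ℝ) (n : ℕ) {q : ℝ} (hq : 0 < q) :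
    HasDerivAt (Dfun a b Pi n) (Dfun a b Pi (n+1) q) q := by
  match n with
  | 0 =>
    have h1 : HasDerivAt (fun q : ℝ => a * q) a q := by
      simpa using (hasDerivAt_id q).const_mul a
    have h2 : HasDerivAt (fun q : ℝ => b * q ^ 2) (2 * b * q) q := by
      have := (hasDerivAt_pow 2 q).const_mul b
      refine this.congr_deriv ?_
      ring
    exact (h1.add h2).add (hasDerivAt_integral_g hPi0 hPiM 0 hq)
  | 1 =>
    have h1 : HasDerivAt (fun q : ℝ => a + 2 * b * q) (2 * b) q := by
      simpa using ((hasDerivAt_id q).const_mul (2*b)).const_add a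
    exact h1.add (hasDerivAt_integral_g hPi0 hPiM 1 hq)
  | 2 =>
    have h1 : HasDerivAt (fun q : ℝ => 2 * b) 0 q := hasDerivAt_const q (2*b)
    have := h1.add (hasDerivAt_integral_g hPi0 hPiM 2 hq)
    refine this.congr_deriv ?_
    show _ = Dfun a b Pi 3 q
    simp [Dfun]
  | (n+3) => exact hasDerivAt_integral_g hPi0 hPiM (n+3) hq

/-- Smoothness from an infinite tower of derivatives. -/
lemma tower_contDiffOn {S : Set ℝ} (hS : IsOpen S) (T : ℕ → ℝ → ℝ)
    (hT : ∀ n, ∀ y ∈ S, HasDerivAt (T n) (T (n+1) y) y) :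
    ∀ (m : ℕ) (k : ℕ), ContDiffOn ℝ m (T k) S := by
  intro m
  induction m with
  | zero =>
    intro k
    rw [show ((0:ℕ) : WithTop ℕ∞) = 0 from rfl, contDiffOn_zero]
    exact fun y hy => ((hT k y hy).differentiableAt.continuousAt).continuousWithinAt
  | succ m ih =>
    intro k
    rw [show ((m+1:ℕ) : WithTop ℕ∞) = (m : WithTop ℕ∞) + 1 by push_cast; rfl,
      contDiffOn_succ_iff_deriv_of_isOpen hS]
    refine ⟨fun y hy => ((hT k y hy).differentiableAt).differentiableWithinAt, ?_, ?_⟩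
    · intro h
      exact absurd h (by simp)
    · exact (ih (k+1)).congr fun y hy => (hT k y hy).deriv

lemma tower_contDiffOn_top {S : Set ℝ} (hS : IsOpen S) (T : ℕ → ℝ → ℝ)
    (hT : ∀ n, ∀ y ∈ S, HasDerivAt (T n) (T (n+1) y) y) :
    ContDiffOn ℝ (⊤ : ℕ∞) (T 0) S := by
  have : ∀ m : ℕ, ContDiffOn ℝ m (T 0) S := fun m => tower_contDiffOn hS T hT m 0
  exact contDiffOn_infty.2 this

lemma tower_iteratedDerivWithin {S : Set ℝ} (hS : IsOpen S) (T : ℕ → ℝ → ℝ)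
    (hT : ∀ n, ∀ y ∈ S, HasDerivAt (T n) (T (n+1) y) y) :
    ∀ n, ∀ y ∈ S, iteratedDerivWithin n (T 0) S y = T n y := by
  intro n
  induction n with
  | zero => intro y _; simp
  | succ n ih =>
    intro y hy
    rw [iteratedDerivWithin_succ,
      derivWithin_congr (fun z hz => ih z hz) (ih y hy),
      derivWithin_of_isOpen hS hy]
    exact (hT n y hy).deriv

/-- The cone of functions generated by `u` and the `h k`, `k ≥ 2`,
closed under products and sums. -/
inductive Cone (u : ℝ → ℝ) (h : ℕ → ℝ → ℝ) : (ℝ → ℝ) → Prop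
  | base_u : Cone u h u
  | base_h (k : ℕ) (hk : 2 ≤ k) : Cone u h (h k)
  | mul {F G} : Cone u h F → Cone u h G → Cone u h (fun y => F y * G y)
  | add {F G} : Cone u h F → Cone u h G → Cone u h (fun y => F y + G y)

lemma Cone.nonneg {S : Set ℝ} {u : ℝ → ℝ} {h : ℕ → ℝ → ℝ}
    (hu : ∀ y ∈ S, 0 ≤ u y) (hh : ∀ k, 2 ≤ k → ∀ y ∈ S, 0 ≤ h k y)
    {F : ℝ → ℝ} (hF : Cone u h F) : ∀ y ∈ S, 0 ≤ F y := by
  induction hF with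
  | base_u => exact hu
  | base_h k hk => exact hh k hk
  | mul hF hG ihF ihG => exact fun y hy => mul_nonneg (ihF y hy) (ihG y hy)
  | add hF hG ihF ihG => exact fun y hy => add_nonneg (ihF y hy) (ihG y hy)

lemma Cone.deriv {S : Set ℝ} {u : ℝ → ℝ} {h : ℕ → ℝ → ℝ}
    (hu : ∀ y ∈ S, HasDerivAt u (-(h 2 y * u y * u y * u y)) y)
    (hh : ∀ k, 2 ≤ k → ∀ y ∈ S, HasDerivAt (h k) (-(h (k+1) y * u y)) y)
    {F : ℝ → ℝ} (hF : Cone u h F) :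
    ∃ G, Cone u h G ∧ ∀ y ∈ S, HasDerivAt F (-(G y)) y := by
  induction hF with
  | base_u =>
    exact ⟨_, ((((Cone.base_h 2 le_rfl).mul Cone.base_u).mul Cone.base_u).mul Cone.base_u), hu⟩
  | base_h k hk =>
    exact ⟨_, (Cone.base_h (k+1) (by omega)).mul Cone.base_u, hh k hk⟩
  | @mul F G hF hG ihF ihG =>
    obtain ⟨GF, hGF, hdF⟩ := ihF
    obtain ⟨GG, hGG, hdG⟩ := ihG
    refine ⟨fun y => GF y * G y + F y * GG y, Cone.add (hGF.mul hG) (hF.mul hGG),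
      fun y hy => ?_⟩
    have := (hdF y hy).mul (hdG y hy)
    refine this.congr_deriv ?_
    ring
  | @add F G hF hG ihF ihG =>
    obtain ⟨GF, hGF, hdF⟩ := ihF
    obtain ⟨GG, hGG, hdG⟩ := ihG
    refine ⟨fun y => GF y + GG y, Cone.add hGF hGG, fun y hy => ?_⟩
    have := (hdF y hy).add (hdG y hy)
    refine this.congr_deriv ?_
    ring

end BernsteinAux


/-- A nonzero (sub)critical branching mechanism `Ψ` is a strictly
increasing bijection of `(0,∞)` onto `(0,∞)`, and its inverse is a Bernstein
function. -/
theorem branching_inverse_isBernstein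
    (Ψ : ℝ → ℝ) (hΨ : IsBranchingMechanism Ψ)
    (hΨne : ¬ (∀ q > (0:ℝ), Ψ q = 0)) :
    StrictMonoOn Ψ (Ioi 0) ∧ Set.BijOn Ψ (Ioi 0) (Ioi 0) ∧
    ∃ Φ : ℝ → ℝ, (∀ q > (0:ℝ), 0 < Φ q ∧ Ψ (Φ q) = q ∧ Φ (Ψ q) = q) ∧
      IsBernstein Φ := by
  classical
  obtain ⟨a, b, Pi, ha, hb, hPi0, hPiM, hform⟩ := hΨ
  set D := BernsteinAux.Dfun a b Pi with hDdef
  -- basic facts about D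
  have hDΨ : ∀ q ∈ Ioi (0:ℝ), Ψ q = D 0 q := by
    intro q hq
    rw [hform q hq, hDdef]
    rfl
  have hD : ∀ n : ℕ, ∀ q ∈ Ioi (0:ℝ), HasDerivAt (D n) (D (n+1) q) q := by
    intro n q hq
    rw [hDdef]
    exact BernsteinAux.hasDerivAt_Dfun hPi0 hPiM a b n hq
  have hΨD : ∀ q ∈ Ioi (0:ℝ), HasDerivAt Ψ (D 1 q) q := by
    intro q hq
    refine (hD 0 q hq).congr_of_eventuallyEq ?_
    filter_upwards [isOpen_Ioi.mem_nhds hq] with y hy using hDΨ y hy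
  have hint0 : ∀ q : ℝ, 0 ≤ ∫ x, BernsteinAux.g 0 q x ∂Pi :=
    fun q => integral_nonneg (fun x => BernsteinAux.g0_nonneg q x)
  have hint1 : ∀ q : ℝ, 0 < q → 0 ≤ ∫ x, BernsteinAux.g 1 q x ∂Pi :=
    fun q hq => integral_nonneg (BernsteinAux.g1_nonneg hq.le)
  have hint2 : ∀ q : ℝ, 0 ≤ ∫ x, BernsteinAux.g 2 q x ∂Pi :=
    fun q => integral_nonneg (fun x => BernsteinAux.g2_nonneg q x)
  have hg1eq : ∀ q x : ℝ, BernsteinAux.g 1 q x = x * (1 - Real.exp (-q * x)) := by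
    intro q x
    show x - x * Real.exp (-q * x) = _
    ring
  -- trichotomy
  have htri : 0 < a ∨ 0 < b ∨ Pi (Ioi 0) ≠ 0 := by
    by_contra hcon
    push_neg at hcon
    obtain ⟨ha0, hb0, hPiIoi⟩ := hcon
    have ha' : a = 0 := le_antisymm ha0 ha
    have hb' : b = 0 := le_antisymm hb0 hb
    have hPiz : Pi = 0 := by
      have hU : (Set.univ : Set ℝ) = Iic 0 ∪ Ioi 0 := by ext x; simp [le_or_gt]
      have huniv : Pi Set.univ = 0 := by
        rw [hU]
        exact le_antisymm ((measure_union_le _ _).trans (by rw [hPi0, hPiIoi]; simp))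
          (zero_le)
      exact Measure.measure_univ_eq_zero.1 huniv
    apply hΨne
    intro q hq
    rw [hform q hq, ha', hb', hPiz]
    simp
  -- positivity of D 1
  have hD1eq : ∀ q : ℝ, D 1 q = a + 2*b*q + ∫ x, BernsteinAux.g 1 q x ∂Pi := by
    intro q; rw [hDdef]; rfl
  have hD1pos : ∀ q ∈ Ioi (0:ℝ), 0 < D 1 q := by
    intro q hq
    have hq0 : (0:ℝ) < q := hq
    have h1 := hint1 q hq0
    rw [hD1eq q]
    rcases htri with hA | hB | hC
    · nlinarith
    · nlinarith
    · obtain ⟨ε, hε, hPiε⟩ := exists_eps hC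
      have hfin := Pi_Ioi_lt_top hPiM hε
      have hc : 0 < (Pi (Ioi ε)).toReal := ENNReal.toReal_pos hPiε.ne' hfin.ne
      have hexpε : Real.exp (-q*ε) < 1 := by rw [Real.exp_lt_one_iff]; nlinarith
      have he : 0 < ε * (1 - Real.exp (-q * ε)) := by nlinarith
      have hlow : (ε * (1 - Real.exp (-q*ε))) * (Pi (Ioi ε)).toReal ≤
          ∫ x, BernsteinAux.g 1 q x ∂Pi := by
        refine integral_ge_indicator (integrable_g hPi0 hPiM 1 hq0) measurableSet_Ioi hfin
          he.le ?_ (BernsteinAux.g1_nonneg hq0.le)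
        intro x hx
        have hεx : ε < x := hx
        rw [hg1eq]
        have hexp : Real.exp (-q*x) ≤ Real.exp (-q*ε) := by
          apply Real.exp_le_exp.2; nlinarith
        have h1e : 0 ≤ 1 - Real.exp (-q*ε) := hexpε.le.trans (le_refl 1) |>.trans_eq rfl |> fun _ => by linarith
        refine mul_le_mul hεx.le (by linarith) h1e (by linarith)
      nlinarith [mul_pos he hc]
  -- strict monotonicity
  have hcontOn : ContinuousOn Ψ (Ioi 0) :=
    fun q hq => ((hΨD q hq).continuousAt).continuousWithinAt
  have hmono : StrictMonoOn Ψ (Ioi 0) := by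
    refine strictMonoOn_of_deriv_pos (convex_Ioi 0) hcontOn ?_
    intro q hq
    rw [interior_Ioi] at hq
    rw [(hΨD q hq).deriv]
    exact hD1pos q hq
  -- positivity of Ψ
  have hΨnonneg : ∀ q : ℝ, 0 < q → 0 ≤ Ψ q := by
    intro q hq
    rw [hform q hq]
    have h0 := hint0 q
    have heq : (∫ x, (Real.exp (-q*x) - 1 + q*x) ∂Pi) = ∫ x, BernsteinAux.g 0 q x ∂Pi := rfl
    rw [heq]
    nlinarith [mul_nonneg ha hq.le, mul_nonneg hb (sq_nonneg q)]
  have hΨpos : ∀ q ∈ Ioi (0:ℝ), 0 < Ψ q := by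
    intro q hq
    have hq0 : (0:ℝ) < q := hq
    have h2 : Ψ (q/2) < Ψ q := hmono (half_pos hq0) hq (by linarith)
    have := hΨnonneg (q/2) (half_pos hq0)
    linarith
  -- surjectivity: small values
  have hMint := integrable_min_fn hPi0 hPiM
  set Mr := ∫ x, min x (x^2) ∂Pi with hMrdef
  have hMr0 : 0 ≤ Mr :=
    integral_nonneg_of_ae ((ae_pos hPi0).mono fun x hx => (lt_min hx (by positivity)).le)
  have hupper : ∀ q : ℝ, 0 < q → Ψ q ≤ a*q + b*q^2 + (q + q^2) * Mr := by
    intro q hq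
    rw [hform q hq]
    have hle : ∫ x, BernsteinAux.g 0 q x ∂Pi ≤ (q + q^2) * Mr := by
      rw [hMrdef, ← integral_const_mul]
      refine integral_mono_ae (integrable_g hPi0 hPiM 0 hq) (hMint.const_mul _) ?_
      exact (ae_pos hPi0).mono fun x hx => BernsteinAux.g0_le hq hx
    have heq : (∫ x, (Real.exp (-q*x) - 1 + q*x) ∂Pi) = ∫ x, BernsteinAux.g 0 q x ∂Pi := rfl
    rw [heq]
    linarith
  have hsmall : ∀ y : ℝ, 0 < y → ∃ q : ℝ, 0 < q ∧ Ψ q < y := by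
    intro y hy
    set K := a + b + 2*Mr + 1 with hK
    have hK0 : 0 < K := by nlinarith
    set q := min 1 (y/(2*K)) with hqdef
    have hq0 : 0 < q := lt_min one_pos (by positivity)
    refine ⟨q, hq0, ?_⟩
    have hq1 : q ≤ 1 := min_le_left _ _
    have hq2 : q ≤ y/(2*K) := min_le_right _ _
    have h := hupper q hq0
    have hqsq : q^2 ≤ q := by nlinarith
    have hdiv : y/(2*K)*K = y/2 := by field_simp
    have hqK : q * K ≤ y/2 := by
      have := mul_le_mul_of_nonneg_right hq2 hK0.le
      rw [hdiv] at this
      linarith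
    have hstep : a*q + b*q^2 + (q+q^2)*Mr ≤ q*K := by
      nlinarith [mul_le_mul_of_nonneg_left hqsq hb, mul_le_mul_of_nonneg_right hqsq hMr0,
        mul_nonneg hq0.le hMr0, mul_le_mul_of_nonneg_left hq1 ha]
    have hfin2 : Ψ q ≤ y/2 := h.trans (hstep.trans hqK)
    linarith
  -- surjectivity: large values
  have hintle : ∀ q : ℝ, 0 < q → ∫ x, BernsteinAux.g 0 q x ∂Pi ≤ Ψ q := by
    intro q hq
    rw [hform q hq]
    have heq : (∫ x, (Real.exp (-q*x) - 1 + q*x) ∂Pi) = ∫ x, BernsteinAux.g 0 q x ∂Pi := rfl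
    rw [heq]
    nlinarith [mul_nonneg ha hq.le, mul_nonneg hb (sq_nonneg q)]
  have hbig : ∀ y : ℝ, 0 < y → ∃ q : ℝ, 0 < q ∧ y < Ψ q := by
    intro y hy
    rcases htri with hA | hB | hC
    · refine ⟨max 1 ((y+1)/a), lt_of_lt_of_le one_pos (le_max_left _ _), ?_⟩
      set q := max 1 ((y+1)/a) with hqdef
      have hq0 : (0:ℝ) < q := lt_of_lt_of_le one_pos (le_max_left _ _)
      have haq : (y+1)/a ≤ q := le_max_right _ _
      have h1 : y + 1 ≤ a * q := by
        rw [div_le_iff₀ hA] at haq; linarith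
      have h2 : a*q ≤ Ψ q := by
        rw [hform q hq0]
        have := hint0 q
        have heq : (∫ x, (Real.exp (-q*x) - 1 + q*x) ∂Pi) = ∫ x, BernsteinAux.g 0 q x ∂Pi := rfl
        rw [heq]
        nlinarith [mul_nonneg hb (sq_nonneg q)]
      linarith
    · refine ⟨max 1 ((y+1)/b), lt_of_lt_of_le one_pos (le_max_left _ _), ?_⟩
      set q := max 1 ((y+1)/b) with hqdef
      have hq0 : (0:ℝ) < q := lt_of_lt_of_le one_pos (le_max_left _ _)
      have hq1 : 1 ≤ q := le_max_left _ _
      have haq : (y+1)/b ≤ q := le_max_right _ _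
      have h1 : y + 1 ≤ b * q := by
        rw [div_le_iff₀ hB] at haq; linarith
      have h2 : b*q^2 ≤ Ψ q := by
        rw [hform q hq0]
        have := hint0 q
        have heq : (∫ x, (Real.exp (-q*x) - 1 + q*x) ∂Pi) = ∫ x, BernsteinAux.g 0 q x ∂Pi := rfl
        rw [heq]
        nlinarith [mul_nonneg ha hq0.le]
      have h3 : b*q ≤ b*q^2 := by nlinarith
      linarith
    · obtain ⟨ε, hε, hPiε⟩ := exists_eps hC
      have hfin := Pi_Ioi_lt_top hPiM hε
      set c := (Pi (Ioi ε)).toReal with hcdef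
      have hc : 0 < c := ENNReal.toReal_pos hPiε.ne' hfin.ne
      refine ⟨(y/c + 2)/ε, by positivity, ?_⟩
      set q := (y/c+2)/ε with hqdef
      have hq0 : 0 < q := by positivity
      have hqε : q * ε = y/c + 2 := by
        rw [hqdef]; field_simp
      have hyc : 0 < y/c := by positivity
      have hge : (q*ε - 1) * c ≤ ∫ x, BernsteinAux.g 0 q x ∂Pi := by
        refine integral_ge_indicator (integrable_g hPi0 hPiM 0 hq0) measurableSet_Ioi hfin
          ?_ ?_ (fun x => BernsteinAux.g0_nonneg q x)
        · rw [hqε]; linarith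
        · intro x hx
          have hεx : ε < x := hx
          show q*ε - 1 ≤ Real.exp (-q*x) - 1 + q*x
          have h1 := (Real.exp_pos (-q*x)).le
          nlinarith
      have h2 := hintle q hq0
      have hfinal : y < (q*ε - 1)*c := by
        rw [hqε]
        have hcc : (y/c + 2 - 1)*c = y + c := by field_simp; ring
        rw [hcc]
        linarith
      linarith
  -- surjectivity via IVT
  have hsurj : ∀ y ∈ Ioi (0:ℝ), ∃ q, q ∈ Ioi (0:ℝ) ∧ Ψ q = y := by
    intro y hy
    have hy0 : (0:ℝ) < y := hy
    obtain ⟨q1, hq1, hlt1⟩ := hsmall y hy0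
    obtain ⟨q2, hq2, hlt2⟩ := hbig y hy0
    have h12 : q1 < q2 := by
      by_contra hcon
      push_neg at hcon
      rcases eq_or_lt_of_le hcon with he | hlt
      · rw [he] at hlt2; linarith
      · have := hmono hq2 hq1 hlt
        linarith
    have hsub : Icc q1 q2 ⊆ Ioi (0:ℝ) := fun x hx => lt_of_lt_of_le hq1 hx.1
    have hcont : ContinuousOn Ψ (Icc q1 q2) := hcontOn.mono hsub
    have hIVT := intermediate_value_Icc h12.le hcont
    obtain ⟨q, hqI, hq⟩ := hIVT ⟨hlt1.le, hlt2.le⟩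
    exact ⟨q, hsub hqI, hq⟩
  have hbij : Set.BijOn Ψ (Ioi 0) (Ioi 0) :=
    ⟨fun q hq => hΨpos q hq, hmono.injOn,
      fun y hy => by obtain ⟨q, hq, he⟩ := hsurj y hy; exact ⟨q, hq, he⟩⟩
  -- the inverse function
  set Φ : ℝ → ℝ := fun y => if h : ∃ q, q ∈ Ioi (0:ℝ) ∧ Ψ q = y then h.choose else 1
    with hΦdef
  have hΦspec : ∀ y ∈ Ioi (0:ℝ), Φ y ∈ Ioi (0:ℝ) ∧ Ψ (Φ y) = y := by
    intro y hy
    have h : ∃ q, q ∈ Ioi (0:ℝ) ∧ Ψ q = y := hsurj y hy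
    simp only [hΦdef]
    rw [dif_pos h]
    exact ⟨h.choose_spec.1, h.choose_spec.2⟩
  have hΦΨ : ∀ q ∈ Ioi (0:ℝ), Φ (Ψ q) = q := by
    intro q hq
    have hyq : Ψ q ∈ Ioi (0:ℝ) := hΨpos q hq
    obtain ⟨h1, h2⟩ := hΦspec (Ψ q) hyq
    exact hmono.injOn h1 hq h2
  -- smoothness and strict derivative of Ψ
  have hΨtop : ContDiffOn ℝ (⊤:ℕ∞) Ψ (Ioi 0) :=
    (BernsteinAux.tower_contDiffOn_top isOpen_Ioi D hD).congr (fun y hy => hDΨ y hy)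
  have hΨstrict : ∀ q ∈ Ioi (0:ℝ), HasStrictDerivAt Ψ (D 1 q) q := by
    intro q hq
    have h3 : ContDiffAt ℝ (⊤:ℕ∞) Ψ q := hΨtop.contDiffAt (isOpen_Ioi.mem_nhds hq)
    have h4 := h3.hasStrictDerivAt (by simp)
    rwa [(hΨD q hq).deriv] at h4
  -- derivative of Φ
  have hΦderiv : ∀ y ∈ Ioi (0:ℝ), HasDerivAt Φ ((D 1 (Φ y))⁻¹) y := by
    intro y hy
    obtain ⟨hΦS, hΨΦ⟩ := hΦspec y hy
    have h1 := hΨstrict (Φ y) hΦS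
    have h2 : ∀ᶠ x in nhds (Φ y), Φ (Ψ x) = x := by
      filter_upwards [isOpen_Ioi.mem_nhds hΦS] with x hx using hΦΨ x hx
    have h3 := h1.to_local_left_inverse (hD1pos _ hΦS).ne' h2
    rw [hΨΦ] at h3
    exact h3.hasDerivAt
  -- cone setup
  set u : ℝ → ℝ := fun y => (D 1 (Φ y))⁻¹ with hu
  set hf : ℕ → ℝ → ℝ := fun k y => (-1:ℝ)^k * D k (Φ y) with hhf
  have hDsign : ∀ k : ℕ, 2 ≤ k → ∀ q ∈ Ioi (0:ℝ), 0 ≤ (-1:ℝ)^k * D k q := by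
    intro k hk q hq
    match k with
    | 0 => exact absurd hk (by omega)
    | 1 => exact absurd hk (by omega)
    | 2 =>
      have h2 := hint2 q
      have hD2eq : D 2 q = 2*b + ∫ x, BernsteinAux.g 2 q x ∂Pi := by rw [hDdef]; rfl
      rw [hD2eq]
      nlinarith
    | (m+3) =>
      have hD3eq : D (m+3) q = ∫ x, BernsteinAux.g (m+3) q x ∂Pi := by rw [hDdef]; rfl
      rw [hD3eq, ← integral_const_mul]
      refine integral_nonneg_of_ae ((ae_pos hPi0).mono fun x hx => ?_)
      show (0:ℝ) ≤ (-1:ℝ)^(m+3) * BernsteinAux.g (m+3) q x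
      have hgeq : BernsteinAux.g (m+3) q x = (-1:ℝ)^(m+1) * (x^(m+3) * Real.exp (-q*x)) := rfl
      rw [hgeq, ← mul_assoc, ← pow_add]
      have he : Even (m+3+(m+1)) := ⟨m+2, by ring⟩
      rw [he.neg_one_pow, one_mul]
      positivity
  have hu_nonneg : ∀ y ∈ Ioi (0:ℝ), 0 ≤ u y :=
    fun y hy => inv_nonneg.2 (hD1pos _ (hΦspec y hy).1).le
  have hh_nonneg : ∀ k : ℕ, 2 ≤ k → ∀ y ∈ Ioi (0:ℝ), 0 ≤ hf k y :=
    fun k hk y hy => hDsign k hk _ (hΦspec y hy).1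
  have hu_deriv : ∀ y ∈ Ioi (0:ℝ), HasDerivAt u (-(hf 2 y * u y * u y * u y)) y := by
    intro y hy
    have hΦS := (hΦspec y hy).1
    have h1 : HasDerivAt (fun y => D 1 (Φ y)) (D 2 (Φ y) * (D 1 (Φ y))⁻¹) y :=
      (hD 1 (Φ y) hΦS).comp y (hΦderiv y hy)
    have hne := (hD1pos _ hΦS).ne'
    have h2 := h1.inv hne
    have hval : -(hf 2 y * u y * u y * u y) =
        -(D 2 (Φ y) * (D 1 (Φ y))⁻¹) / (D 1 (Φ y))^2 := by
      simp only [hhf, hu]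
      rw [div_eq_mul_inv, pow_two (D 1 (Φ y)), mul_inv]
      ring
    rw [hval]
    exact h2
  have hh_deriv : ∀ k : ℕ, 2 ≤ k → ∀ y ∈ Ioi (0:ℝ),
      HasDerivAt (hf k) (-(hf (k+1) y * u y)) y := by
    intro k hk y hy
    have hΦS := (hΦspec y hy).1
    have h1 := ((hD k (Φ y) hΦS).comp y (hΦderiv y hy)).const_mul ((-1:ℝ)^k)
    have hval : -(hf (k+1) y * u y) = (-1:ℝ)^k * (D (k+1) (Φ y) * (D 1 (Φ y))⁻¹) := by
      simp only [hhf, hu, pow_succ]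
      ring
    rw [hval]
    exact h1
  -- iterate the cone derivative
  have key : ∀ F : ℝ → ℝ, BernsteinAux.Cone u hf F →
      ∃ G, BernsteinAux.Cone u hf G ∧ ∀ y ∈ Ioi (0:ℝ), HasDerivAt F (-(G y)) y :=
    fun F hF => BernsteinAux.Cone.deriv hu_deriv hh_deriv hF
  choose next hnextCone hnextDeriv using key
  let C : ℕ → {F : ℝ → ℝ // BernsteinAux.Cone u hf F} := fun n =>
    Nat.rec ⟨u, BernsteinAux.Cone.base_u⟩ (fun _ p => ⟨next p.1 p.2, hnextCone p.1 p.2⟩) n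
  have hCderiv : ∀ n : ℕ, ∀ y ∈ Ioi (0:ℝ), HasDerivAt (C n).1 (-((C (n+1)).1 y)) y :=
    fun n => hnextDeriv (C n).1 (C n).2
  have hCnonneg : ∀ n : ℕ, ∀ y ∈ Ioi (0:ℝ), 0 ≤ (C n).1 y :=
    fun n => BernsteinAux.Cone.nonneg hu_nonneg hh_nonneg (C n).2
  -- the tower of derivatives of Φ
  let T : ℕ → ℝ → ℝ := fun n => Nat.rec Φ (fun m _ => fun y => (-1:ℝ)^m * (C m).1 y) n
  have hT : ∀ n : ℕ, ∀ y ∈ Ioi (0:ℝ), HasDerivAt (T n) (T (n+1) y) y := by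
    intro n y hy
    match n with
    | 0 =>
      show HasDerivAt (T 0) (T 1 y) y
      have hval : T 1 y = (D 1 (Φ y))⁻¹ := by
        show (-1:ℝ)^0 * (C 0).1 y = _
        show (-1:ℝ)^0 * u y = _
        simp [hu]
      rw [hval]
      exact hΦderiv y hy
    | (m+1) =>
      show HasDerivAt (T (m+1)) (T (m+2) y) y
      have h1 := (hCderiv m y hy).const_mul ((-1:ℝ)^m)
      have hval : T (m+2) y = (-1:ℝ)^m * -((C (m+1)).1 y) := by
        show (-1:ℝ)^(m+1) * (C (m+1)).1 y = _
        rw [pow_succ]; ring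
      rw [hval]
      exact h1
  have hΦtop : ContDiffOn ℝ (⊤:ℕ∞) Φ (Ioi 0) :=
    BernsteinAux.tower_contDiffOn_top isOpen_Ioi T hT
  have hiter : ∀ n : ℕ, ∀ y ∈ Ioi (0:ℝ), iteratedDerivWithin n Φ (Ioi 0) y = T n y :=
    BernsteinAux.tower_iteratedDerivWithin isOpen_Ioi T hT
  -- assemble
  refine ⟨hmono, hbij, Φ, ?_, hΦtop, ?_, ?_⟩
  · intro q hq
    exact ⟨(hΦspec q hq).1, (hΦspec q hq).2, hΦΨ q hq⟩
  · intro q hq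
    exact ((hΦspec q hq).1 : (0:ℝ) < Φ q).le
  · intro n hn q hq
    rw [hiter n q hq]
    match n, hn with
    | (m+1), _ =>
      have hTval : T (m+1) q = (-1:ℝ)^m * (C m).1 q := rfl
      rw [hTval]
      have hsub : m + 1 - 1 = m := rfl
      rw [hsub, ← mul_assoc, ← pow_add]
      have he : Even (m + m) := ⟨m, rfl⟩
      rw [he.neg_one_pow, one_mul]
      exact hCnonneg m q hq
end
end
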